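/- arXiv:2511.21571 — 6 statements merged into one kernel-verified Lean document; each statement's English description precedes it below -/
import Mathlib

section
/- For every d ∈ ℕ there exists a family of graphs (R(m,d))_{m∈ℕ}, where R(m,d) has vertex set {0,1}^d × [m], such that for every ε > 0 there exists m₀ with the following for all m ≥ m₀: (i) for every ℓ ∈ [d], (1−ε)·2^(d−1)·m² ≤ e_ℓ(R(m,d)) ≤ (1+ε)·2^(d−1)·m², and consequently (1−ε)·d·2^(d−1)·m² ≤ e(R(m,d)) ≤ (1+ε)·d·2^(d−1)·m²; and (ii) for all distinct x, y ∈ {0,1}^d and all P ⊆ B_x, Q ⊆ B_y with |P|, |Q| ≥ m^(2/3), the number of edges of R(m,d) between P and Q is at most (1+ε)·2^(−d+δ(x,y))·|P|·|Q|. -/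
open scoped Classical

/-- `G` contains an ordered copy of `F`: a strictly order-preserving map
sending edges to edges. -/
def ContainsOrderedCopy {α β : Type*} [Preorder α] [Preorder β]
    (F : SimpleGraph α) (G : SimpleGraph β) : Prop :=
  ∃ φ : α → β, StrictMono φ ∧ ∀ u v, F.Adj u v → G.Adj (φ u) (φ v)

/-- The number of edges of a simple graph. -/
noncomputable def edgeCount {α : Type*} (G : SimpleGraph α) : ℕ := G.edgeSet.ncard

/-- `ρ_<(F, G)`: the largest edge-density of an `F`-free (ordered) subgraph of `G`. -/
noncomputable def relTuranDensityIn {α β : Type*} [Preorder α] [Preorder β]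
    (F : SimpleGraph α) (G : SimpleGraph β) : ℝ :=
  sSup {r : ℝ | ∃ G' : G.Subgraph, ¬ ContainsOrderedCopy F G'.coe ∧
    r = (edgeCount G'.coe : ℝ) / (edgeCount G : ℝ)}

/-- `ρ_<(F)`: the relative Turán density of an ordered graph `F`, the infimum of
`ρ_<(F, G)` over all finite ordered graphs `G` with at least one edge. -/
noncomputable def relTuranDensity {α : Type*} [Preorder α] (F : SimpleGraph α) : ℝ :=
  sInf {r : ℝ | ∃ (n : ℕ) (G : SimpleGraph (Fin n)),
    1 ≤ edgeCount G ∧ r = relTuranDensityIn F G}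

/-- The cube `{0,1}^d`, ordered lexicographically (index `0` most significant). -/
abbrev Cube (d : ℕ) := Lex (Fin d → Bool)

noncomputable instance (priority := 2000) (d : ℕ) : LinearOrder (Cube d) :=
  haveI : WellFoundedLT (Fin d) := inferInstance
  inferInstance

instance instFintypeLexSelf {α : Type*} [Fintype α] : Fintype (Lex α) := ‹Fintype α›

/-- `δ(x, y) = ℓ`, with positions `1`-indexed: the least (1-indexed) coordinate at which
`x` and `y` differ is `ℓ`. -/
def atLevel {d : ℕ} (ℓ : ℕ) (x y : Cube d) : Prop :=
  ∃ i : Fin d, (i : ℕ) + 1 = ℓ ∧ ofLex x i ≠ ofLex y i ∧ ∀ j < i, ofLex x j = ofLex y j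

/-- `e_ℓ(G)`: the number of level-`ℓ` edges of a graph `G` on `{0,1}^d`. -/
noncomputable def levelCount {d : ℕ} (G : SimpleGraph (Cube d)) (ℓ : ℕ) : ℕ :=
  {p : Cube d × Cube d | p.1 < p.2 ∧ G.Adj p.1 p.2 ∧ atLevel ℓ p.1 p.2}.ncard

/-- `τ_{ℓ,d} = 2 ^ (2d - ℓ - 1)`. -/
def tau (d ℓ : ℕ) : ℕ := 2 ^ (2 * d - ℓ - 1)

/-- The level `ℓ` is `α`-rich with respect to `G`, i.e. `e_ℓ(G) ≥ α · τ_{ℓ,d}`. -/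
def IsRichLevel {d : ℕ} (G : SimpleGraph (Cube d)) (α : ℝ) (ℓ : ℕ) : Prop :=
  α * (tau d ℓ : ℝ) ≤ (levelCount G ℓ : ℝ)

/-- `G` is `(α, C)`-rich: at least `C` levels `ℓ ∈ [d]` are `α`-rich. -/
def IsRichGraph {d : ℕ} (G : SimpleGraph (Cube d)) (α C : ℝ) : Prop :=
  C ≤ ({ℓ : ℕ | ℓ ∈ Finset.Icc 1 d ∧ IsRichLevel G α ℓ}.ncard : ℝ)

/-- The vertex set `{0,1}^d × [m]`, ordered lexicographically. -/
abbrev BlockVert (d m : ℕ) := Lex (Cube d × Fin m)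

/-- `e_ℓ(R)` for a graph `R` on `{0,1}^d × [m]`: the number of edges whose endpoints lie in
blocks `B_x`, `B_y` with `δ(x,y) = ℓ`. -/
noncomputable def levelCountB {d m : ℕ} (R : SimpleGraph (BlockVert d m)) (ℓ : ℕ) : ℕ :=
  {p : BlockVert d m × BlockVert d m |
    p.1 < p.2 ∧ R.Adj p.1 p.2 ∧ atLevel ℓ (ofLex p.1).1 (ofLex p.2).1}.ncard

/-- Property (i) with accuracy `ε`: every level `ℓ ∈ [d]` has
`(1−ε)·2^(d−1)·m² ≤ e_ℓ(R) ≤ (1+ε)·2^(d−1)·m²`. -/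
def PropI {d m : ℕ} (R : SimpleGraph (BlockVert d m)) (ε : ℝ) : Prop :=
  ∀ ℓ ∈ Finset.Icc 1 d,
    (1 - ε) * 2 ^ (d - 1) * (m : ℝ) ^ 2 ≤ (levelCountB R ℓ : ℝ) ∧
    (levelCountB R ℓ : ℝ) ≤ (1 + ε) * 2 ^ (d - 1) * (m : ℝ) ^ 2

/-- Property (ii) with accuracy `ε`: for all distinct `x, y ∈ {0,1}^d` (say `δ(x,y) = ℓ`) and
all `P ⊆ B_x`, `Q ⊆ B_y` of size at least `m^(2/3)`, the number of edges of `R` between `P`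
and `Q` is at most `(1+ε)·2^(−d+ℓ)·|P|·|Q|`. -/
def PropII {d m : ℕ} (R : SimpleGraph (BlockVert d m)) (ε : ℝ) : Prop :=
  ∀ (x y : Cube d) (ℓ : ℕ), atLevel ℓ x y →
    ∀ P Q : Finset (Fin m),
      (m : ℝ) ^ ((2 : ℝ)/3) ≤ (P.card : ℝ) → (m : ℝ) ^ ((2 : ℝ)/3) ≤ (Q.card : ℝ) →
      ({pq : Fin m × Fin m | pq.1 ∈ P ∧ pq.2 ∈ Q ∧
          R.Adj (toLex (x, pq.1)) (toLex (y, pq.2))}.ncard : ℝ) ≤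
        (1 + ε) * 2 ^ ((ℓ : ℤ) - (d : ℤ)) * (P.card : ℝ) * (Q.card : ℝ)

/-- `F` contains a monotone path of length two: vertices `u < v < w` with
`uv, vw ∈ E(F)`. -/
def HasMonotonePathTwo {α : Type*} [Preorder α] (F : SimpleGraph α) : Prop :=
  ∃ u v w, u < v ∧ v < w ∧ F.Adj u v ∧ F.Adj v w

/-- The ordered graph `H_k` on `[k] × {0,1}` (ordered lexicographically), with edges
`(x,0)(y,1)` for `x ≤ y`. -/
def Hgraph (k : ℕ) : SimpleGraph (Lex (Fin k × Bool)) :=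
  SimpleGraph.fromRel (fun a b =>
    (ofLex a).2 = false ∧ (ofLex b).2 = true ∧ (ofLex a).1 ≤ (ofLex b).1)

/-!
`R(m,d)` blows up the cube `{0,1}^d`: identify `[m]` with a subset of the field `𝔽 = 𝔽_{2^t}`,
`m ≤ |𝔽| ≤ 2^(d+1) m`, and join `(x,p)` to `(y,q)` when `δ(x,y) = ℓ` and the first `d - ℓ`
coordinates of `pq ∈ 𝔽` over `𝔽₂` vanish. That is a condition `pq ∈ H` for an additive subgroup
`H` of index `2^(d-ℓ)`. Expanding its indicator in additive characters, each nontrivial character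
contributes at most `√(|𝔽||P||Q|)` on `P × Q` (Lindsey's lemma: Cauchy–Schwarz, then orthogonality
of `z ↦ ψ(zq)`), which is `o(|P||Q|)` once `|P|, |Q| ≥ m^(2/3)`. Property (i) is the case
`P = Q = [m]`, together with the count `2^(2d-ℓ-1)` of pairs `x < y` at level `ℓ`.
-/

open Finset

section AddChar

variable {F : Type*} [Field F] [Fintype F] [DecidableEq F]

theorem sum_norm_sq_sum_addChar_mul {ψ : AddChar F ℂ} (hψ : ψ ≠ 1) (Q : Finset F) :
    ∑ z : F, ‖∑ q ∈ Q, ψ (z * q)‖ ^ 2 = Fintype.card F * #Q := by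
  have hexpand (z : F) : ((‖∑ q ∈ Q, ψ (z * q)‖ ^ 2 : ℝ) : ℂ) =
      ∑ q ∈ Q, ∑ q' ∈ Q, ψ (z * (q - q')) := by
    rw [Complex.ofReal_pow, ← Complex.mul_conj', map_sum, sum_mul_sum]
    refine sum_congr rfl fun q _ => sum_congr rfl fun q' _ => ?_
    rw [← AddChar.map_neg_eq_conj, ← AddChar.map_add_eq_mul, mul_sub, sub_eq_add_neg]
  apply Complex.ofReal_injective
  push_cast [hexpand]
  rw [sum_comm]
  simp_rw [sum_comm (s := univ), AddChar.sum_mulShift _ (AddChar.IsPrimitive.of_ne_one hψ),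
    sub_eq_zero]
  simp [mul_comm]

theorem norm_sum_sum_addChar_mul_le {ψ : AddChar F ℂ} (hψ : ψ ≠ 1) (P Q : Finset F) :
    ‖∑ p ∈ P, ∑ q ∈ Q, ψ (p * q)‖ ≤ √(Fintype.card F * #P * #Q) := by
  apply Real.le_sqrt_of_sq_le
  calc ‖∑ p ∈ P, ∑ q ∈ Q, ψ (p * q)‖ ^ 2
      ≤ (∑ p ∈ P, ‖∑ q ∈ Q, ψ (p * q)‖) ^ 2 := by gcongr; exact norm_sum_le _ _
    _ ≤ #P * ∑ p ∈ P, ‖∑ q ∈ Q, ψ (p * q)‖ ^ 2 := sq_sum_le_card_mul_sum_sq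
    _ ≤ #P * ∑ z : F, ‖∑ q ∈ Q, ψ (z * q)‖ ^ 2 := by
      gcongr; exact subset_univ P
    _ = Fintype.card F * #P * #Q := by rw [sum_norm_sq_sum_addChar_mul hψ]; ring

theorem abs_card_filter_mul_eq_zero_sub_le {W : Type*} [AddCommGroup W] [Fintype W]
    [DecidableEq W] (L : F →+ W) (hL : Function.Surjective L) (P Q : Finset F) :
    |(#{x ∈ P ×ˢ Q | L (x.1 * x.2) = 0} : ℝ) - #P * #Q / Fintype.card W| ≤
      √(Fintype.card F * #P * #Q) := by
  set S : AddChar W ℂ → ℂ := fun ψ => ∑ p ∈ P, ∑ q ∈ Q, ψ (L (p * q))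
  have hsum : (Fintype.card W * #{x ∈ P ×ˢ Q | L (x.1 * x.2) = 0} : ℂ) = ∑ ψ, S ψ := by
    calc (Fintype.card W * #{x ∈ P ×ˢ Q | L (x.1 * x.2) = 0} : ℂ)
        = ∑ x ∈ P ×ˢ Q, ∑ ψ : AddChar W ℂ, ψ (L (x.1 * x.2)) := by
          rw [card_filter, Nat.cast_sum, mul_sum]
          refine sum_congr rfl fun x _ => ?_
          rw [AddChar.sum_apply_eq_ite]
          split_ifs <;> simp
      _ = ∑ ψ, S ψ := by rw [sum_comm]; simp only [S, sum_product]
  have hS_one : S 1 = #P * #Q := by simp [S]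
  have hS_ne_one {ψ : AddChar W ℂ} (hψ : ψ ≠ 1) : ‖S ψ‖ ≤ √(Fintype.card F * #P * #Q) := by
    refine norm_sum_sum_addChar_mul_le (ψ := ψ.compAddMonoidHom L) ?_ P Q
    intro h
    exact hψ (AddChar.compAddMonoidHom_injective_left L hL (h.trans (by ext; simp)))
  have hW : (0 : ℝ) < Fintype.card W := by exact_mod_cast Fintype.card_pos
  have hmain : |Fintype.card W * #{x ∈ P ×ˢ Q | L (x.1 * x.2) = 0} - (#P * #Q : ℝ)| ≤
      Fintype.card W * √(Fintype.card F * #P * #Q) := by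
    rw [← Real.norm_eq_abs, ← Complex.norm_real]
    push_cast
    rw [hsum, ← add_sum_erase _ _ (mem_univ 1), hS_one, add_sub_cancel_left]
    calc ‖∑ ψ ∈ univ.erase 1, S ψ‖
        ≤ ∑ ψ ∈ univ.erase (1 : AddChar W ℂ), √(Fintype.card F * #P * #Q) :=
          (norm_sum_le _ _).trans (sum_le_sum fun ψ hψ => hS_ne_one (ne_of_mem_erase hψ))
      _ ≤ Fintype.card W * √(Fintype.card F * #P * #Q) := by
        rw [sum_const, nsmul_eq_mul]
        gcongr
        exact_mod_cast (card_le_univ _).trans_eq AddChar.card_eq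
  rw [show (#{x ∈ P ×ˢ Q | L (x.1 * x.2) = 0} : ℝ) - #P * #Q / Fintype.card W =
      (Fintype.card W * #{x ∈ P ×ˢ Q | L (x.1 * x.2) = 0} - #P * #Q) / Fintype.card W by
    field_simp, abs_div, abs_of_pos hW, div_le_iff₀ hW]
  linarith

end AddChar

section Levels

variable {d ℓ ℓ' : ℕ} {x y : Cube d}

theorem atLevel.symm (h : atLevel ℓ x y) : atLevel ℓ y x :=
  let ⟨i, hi, hne, hagree⟩ := h
  ⟨i, hi, hne.symm, fun j hj => (hagree j hj).symm⟩

theorem atLevel.ne (h : atLevel ℓ x y) : x ≠ y := by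
  rintro rfl
  obtain ⟨_, _, hne, _⟩ := h
  exact hne rfl

theorem atLevel.mem_Icc (h : atLevel ℓ x y) : ℓ ∈ Icc 1 d := by
  obtain ⟨i, rfl, _⟩ := h
  simp [i.isLt]

theorem atLevel.unique (h : atLevel ℓ x y) (h' : atLevel ℓ' x y) : ℓ = ℓ' := by
  obtain ⟨i, rfl, hne, hagree⟩ := h
  obtain ⟨i', rfl, hne', hagree'⟩ := h'
  rcases lt_trichotomy i i' with hlt | rfl | hgt
  · exact absurd (hagree' i hlt) hne
  · rfl
  · exact absurd (hagree i' hgt) hne'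

theorem atLevel_of_lt_of_eq {i : Fin d} (hlt : ofLex x i < ofLex y i)
    (hagree : ∀ j < i, ofLex x j = ofLex y j) : atLevel (i + 1) x y :=
  ⟨i, rfl, hlt.ne, hagree⟩

theorem exists_atLevel_of_ne (h : x ≠ y) : ∃ ℓ, atLevel ℓ x y := by
  rcases h.lt_or_gt with ⟨i, hagree, hlt⟩ | ⟨i, hagree, hlt⟩
  · exact ⟨_, atLevel_of_lt_of_eq hlt hagree⟩
  · exact ⟨_, (atLevel_of_lt_of_eq hlt hagree).symm⟩

theorem lt_and_atLevel_iff (i : Fin d) :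
    x < y ∧ atLevel (i + 1) x y ↔
      (∀ j < i, ofLex x j = ofLex y j) ∧ ofLex x i = false ∧ ofLex y i = true := by
  have hBool {a b : Bool} : a < b ↔ a = false ∧ b = true := by cases a <;> cases b <;> decide
  constructor
  · rintro ⟨⟨i', hagree', hlt'⟩, h⟩
    obtain rfl := Fin.ext (Nat.succ_injective ((atLevel_of_lt_of_eq hlt' hagree').unique h))
    exact ⟨hagree', hBool.1 hlt'⟩
  · rintro ⟨hagree, hlt⟩
    exact ⟨⟨i, hagree, hBool.2 hlt⟩, atLevel_of_lt_of_eq (hBool.2 hlt) hagree⟩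

theorem prod_ite_lt_ite_eq (i : Fin d) :
    ∏ j : Fin d, (if j < i then 2 else if j = i then 1 else 4 : ℕ) = 2 ^ (2 * d - (i + 1) - 1) := by
  let f : ℕ → ℕ := fun k => if k < i then 2 else if k = i then 1 else 4
  have hbelow : ∏ k ∈ range i, f k = 2 ^ (i : ℕ) :=
    (prod_congr rfl fun k hk => if_pos (mem_range.1 hk)).trans (by simp)
  have habove : ∏ k ∈ Ico ((i : ℕ) + 1) d, f k = 4 ^ (d - (i + 1)) := by
    refine (prod_congr rfl fun k hk => ?_).trans (by rw [prod_const, Nat.card_Ico])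
    have := (mem_Ico.1 hk).1
    simp only [f, if_neg (show ¬k < i by omega), if_neg (show k ≠ i by omega)]
  simp only [Fin.lt_def, Fin.ext_iff]
  rw [Fin.prod_univ_eq_prod_range f, ← prod_range_mul_prod_Ico _ (show (i : ℕ) + 1 ≤ d from i.isLt),
    prod_range_succ, hbelow, habove, show f i = 1 by simp [f], mul_one, show 4 = 2 ^ 2 by rfl,
    ← pow_mul, ← pow_add]
  congr 1
  omega

theorem ncard_lt_atLevel (hℓ : ℓ ∈ Icc 1 d) :
    {p : Cube d × Cube d | p.1 < p.2 ∧ atLevel ℓ p.1 p.2}.ncard = 2 ^ (2 * d - ℓ - 1) := by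
  obtain ⟨i, rfl⟩ : ∃ i : Fin d, (i : ℕ) + 1 = ℓ := by
    rw [mem_Icc] at hℓ
    exact ⟨⟨ℓ - 1, by omega⟩, Nat.sub_add_cancel hℓ.1⟩
  let t : Fin d → Finset (Bool × Bool) := fun j =>
    if j < i then univ.diag else if j = i then {(false, true)} else univ
  let e : (Fin d → Bool × Bool) ≃ Cube d × Cube d :=
    (Equiv.arrowProdEquivProdArrow _ _ _).trans (toLex.prodCongr toLex)
  have hset : {p : Cube d × Cube d | p.1 < p.2 ∧ atLevel (i + 1) p.1 p.2} =
      e.symm ⁻¹' Fintype.piFinset t := by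
    ext ⟨x, y⟩
    simp only [Set.mem_ofPred_eq, lt_and_atLevel_iff, Set.mem_preimage, mem_coe,
      Fintype.mem_piFinset]
    constructor
    · rintro ⟨hagree, hx, hy⟩ j
      rcases lt_trichotomy j i with hj | rfl | hj
      · simp [t, e, hj, hagree j hj]
      · simp [t, e, hx, hy]
      · simp [t, e, hj.not_gt, hj.ne']
    · intro h
      refine ⟨fun j hj => ?_, ?_⟩
      · simpa [t, e, hj] using h j
      · simpa [t, e] using h i
  have hcard (j : Fin d) : #(t j) = if j < i then 2 else if j = i then 1 else 4 := by
    simp only [t]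
    split_ifs <;> simp [diag_card]
  rw [hset, Set.ncard_preimage_of_injective_subset_range e.symm.injective (by simp),
    Set.ncard_coe_finset, Fintype.card_piFinset, Fintype.prod_congr _ _ hcard,
    prod_ite_lt_ite_eq]

end Levels

section Blowup

variable {d m : ℕ}

def cubeBlowup (E : ℕ → Fin m → Fin m → Prop) (hE : ∀ ℓ, Std.Symm (E ℓ)) :
    SimpleGraph (BlockVert d m) where
  Adj u v := ∃ ℓ, atLevel ℓ (ofLex u).1 (ofLex v).1 ∧ E ℓ (ofLex u).2 (ofLex v).2
  symm := ⟨fun _ _ ⟨ℓ, hℓ, huv⟩ => ⟨ℓ, hℓ.symm, (hE ℓ).symm _ _ huv⟩⟩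
  loopless := ⟨fun _ ⟨_, hℓ, _⟩ => hℓ.ne rfl⟩

variable {E : ℕ → Fin m → Fin m → Prop} {hE : ∀ ℓ, Std.Symm (E ℓ)}

theorem cubeBlowup_adj_toLex {ℓ : ℕ} {x y : Cube d} (hxy : atLevel ℓ x y) (p q : Fin m) :
    (cubeBlowup E hE).Adj (toLex (x, p)) (toLex (y, q)) ↔ E ℓ p q :=
  ⟨fun ⟨_, hℓ', hpq⟩ => hxy.unique hℓ' ▸ hpq, fun hpq => ⟨ℓ, hxy, hpq⟩⟩

theorem levelCountB_cubeBlowup (ℓ : ℕ) :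
    levelCountB (cubeBlowup (d := d) E hE) ℓ =
      {p : Cube d × Cube d | p.1 < p.2 ∧ atLevel ℓ p.1 p.2}.ncard *
        {pq : Fin m × Fin m | E ℓ pq.1 pq.2}.ncard := by
  let e : BlockVert d m × BlockVert d m ≃ (Cube d × Cube d) × (Fin m × Fin m) :=
    (ofLex.prodCongr ofLex).trans (Equiv.prodProdProdComm _ _ _ _)
  have hset : {uv : BlockVert d m × BlockVert d m | uv.1 < uv.2 ∧ (cubeBlowup E hE).Adj uv.1 uv.2 ∧
      atLevel ℓ (ofLex uv.1).1 (ofLex uv.2).1} =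
      e ⁻¹' ({p : Cube d × Cube d | p.1 < p.2 ∧ atLevel ℓ p.1 p.2} ×ˢ
        {pq : Fin m × Fin m | E ℓ pq.1 pq.2}) := by
    ext ⟨u, v⟩
    obtain ⟨⟨x, p⟩, rfl⟩ := toLex.surjective u
    obtain ⟨⟨y, q⟩, rfl⟩ := toLex.surjective v
    simp only [Set.mem_ofPred_eq, Set.mem_preimage, Set.mem_prod, e, Equiv.trans_apply,
      Equiv.prodCongr_apply, Prod.map, Equiv.prodProdProdComm_apply, ofLex_toLex, Prod.Lex.lt_iff]
    constructor
    · rintro ⟨hlt, hadj, hℓ⟩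
      exact ⟨⟨hlt.resolve_right fun h => hℓ.ne h.1, hℓ⟩, (cubeBlowup_adj_toLex hℓ p q).1 hadj⟩
    · rintro ⟨⟨hlt, hℓ⟩, hpq⟩
      exact ⟨Or.inl hlt, (cubeBlowup_adj_toLex hℓ p q).2 hpq, hℓ⟩
  rw [levelCountB, hset, Set.ncard_preimage_of_injective_subset_range e.injective (by simp),
    Set.ncard_prod]

theorem edgeCount_eq_ncard_lt {V : Type*} [LinearOrder V] (G : SimpleGraph V) :
    edgeCount G = {p : V × V | p.1 < p.2 ∧ G.Adj p.1 p.2}.ncard := by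
  refine (Set.ncard_congr (fun p _ => s(p.1, p.2)) ?_ ?_ ?_).symm
  · exact fun p hp => hp.2
  · rintro ⟨a, b⟩ ⟨a', b'⟩ ⟨hab, -⟩ ⟨hab', -⟩ h
    rcases Sym2.eq_iff.1 h with ⟨rfl, rfl⟩ | ⟨rfl, rfl⟩
    · rfl
    · exact absurd hab hab'.asymm
  · refine Sym2.ind fun a b hab => ?_
    rcases (G.ne_of_adj hab).lt_or_gt with h | h
    · exact ⟨(a, b), ⟨h, hab⟩, rfl⟩
    · exact ⟨(b, a), ⟨h, hab.symm⟩, Sym2.eq_swap⟩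

theorem edgeCount_eq_sum_levelCountB (R : SimpleGraph (BlockVert d m))
    (hR : ∀ u v, R.Adj u v → (ofLex u).1 ≠ (ofLex v).1) :
    edgeCount R = ∑ ℓ ∈ Icc 1 d, levelCountB R ℓ := by
  have hunion : {uv : BlockVert d m × BlockVert d m | uv.1 < uv.2 ∧ R.Adj uv.1 uv.2} =
      ↑((Icc 1 d).biUnion fun ℓ => {uv : BlockVert d m × BlockVert d m |
        uv.1 < uv.2 ∧ R.Adj uv.1 uv.2 ∧ atLevel ℓ (ofLex uv.1).1 (ofLex uv.2).1}) := by
    ext uv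
    simp only [Set.mem_ofPred_eq, coe_biUnion, mem_coe, coe_filter, Set.mem_iUnion, mem_univ,
      true_and, exists_prop]
    constructor
    · rintro ⟨hlt, hadj⟩
      obtain ⟨ℓ, hℓ⟩ := exists_atLevel_of_ne (hR _ _ hadj)
      exact ⟨ℓ, hℓ.mem_Icc, hlt, hadj, hℓ⟩
    · rintro ⟨_, _, hlt, hadj, _⟩
      exact ⟨hlt, hadj⟩
  rw [edgeCount_eq_ncard_lt, hunion, Set.ncard_coe_finset, card_biUnion]
  · refine sum_congr rfl fun ℓ _ => ?_
    rw [levelCountB, ← Set.ncard_coe_finset, coe_filter]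
    simp
  · intro ℓ _ ℓ' _ hne
    simp only [Function.onFun, disjoint_left, mem_filter]
    exact fun _ h h' => hne (h.2.2.2.unique h'.2.2.2)

theorem fst_ne_of_cubeBlowup_adj {u v : BlockVert d m} (h : (cubeBlowup E hE).Adj u v) :
    (ofLex u).1 ≠ (ofLex v).1 :=
  let ⟨_, hℓ, _⟩ := h
  hℓ.ne

variable {R : SimpleGraph (BlockVert d m)} {ε : ℝ}

theorem PropI.le_edgeCount (hR : ∀ u v, R.Adj u v → (ofLex u).1 ≠ (ofLex v).1)
    (h : PropI R ε) : (1 - ε) * d * 2 ^ (d - 1) * (m : ℝ) ^ 2 ≤ edgeCount R := by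
  rw [edgeCount_eq_sum_levelCountB R hR, Nat.cast_sum]
  calc (1 - ε) * d * 2 ^ (d - 1) * (m : ℝ) ^ 2
      = ∑ _ℓ ∈ Icc 1 d, (1 - ε) * 2 ^ (d - 1) * (m : ℝ) ^ 2 := by
        rw [sum_const, Nat.card_Icc, add_tsub_cancel_right, nsmul_eq_mul]; ring
    _ ≤ ∑ ℓ ∈ Icc 1 d, (levelCountB R ℓ : ℝ) := sum_le_sum fun ℓ hℓ => (h ℓ hℓ).1

theorem PropI.edgeCount_le (hR : ∀ u v, R.Adj u v → (ofLex u).1 ≠ (ofLex v).1)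
    (h : PropI R ε) : edgeCount R ≤ (1 + ε) * d * 2 ^ (d - 1) * (m : ℝ) ^ 2 := by
  rw [edgeCount_eq_sum_levelCountB R hR, Nat.cast_sum]
  calc ∑ ℓ ∈ Icc 1 d, (levelCountB R ℓ : ℝ)
      ≤ ∑ _ℓ ∈ Icc 1 d, (1 + ε) * 2 ^ (d - 1) * (m : ℝ) ^ 2 := sum_le_sum fun ℓ hℓ => (h ℓ hℓ).2
    _ = (1 + ε) * d * 2 ^ (d - 1) * (m : ℝ) ^ 2 := by
      rw [sum_const, Nat.card_Icc, add_tsub_cancel_right, nsmul_eq_mul]; ring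

end Blowup

theorem two_pow_mul_sqrt_le {d k : ℕ} {m a b ε : ℝ} (hk : k ≤ d) (hm : 0 ≤ m) (hε : 0 ≤ ε)
    (hεm : 2 ^ (3 * d + 1) ≤ ε ^ 2 * m ^ ((1 : ℝ) / 3))
    (ha : m ^ ((2 : ℝ) / 3) ≤ a) (hb : m ^ ((2 : ℝ) / 3) ≤ b) :
    2 ^ k * √(2 ^ (d + 1) * m * a * b) ≤ ε * (a * b) := by
  set r := m ^ ((1 : ℝ) / 3) with hr
  have hr0 : 0 ≤ r := by positivity
  have hrpow (n : ℕ) : r ^ n = m ^ ((n : ℝ) / 3) := by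
    rw [hr, ← Real.rpow_natCast, ← Real.rpow_mul hm, one_div_mul_eq_div]
  have hab : r ^ 4 ≤ a * b := by
    rw [show r ^ 4 = r ^ 2 * r ^ 2 by ring, hrpow]
    push_cast
    exact mul_le_mul ha hb (by positivity) ((Real.rpow_nonneg hm _).trans ha)
  have ha0 : 0 ≤ a := (Real.rpow_nonneg hm _).trans ha
  have hb0 : 0 ≤ b := (Real.rpow_nonneg hm _).trans hb
  have hab0 : 0 ≤ a * b := mul_nonneg ha0 hb0
  have hpow : (2 : ℝ) ^ (d + 1) * (2 ^ k) ^ 2 ≤ 2 ^ (3 * d + 1) := by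
    rw [← pow_mul, ← pow_add]
    exact pow_le_pow_right₀ one_le_two (by omega)
  rw [← pow_le_pow_iff_left₀ (by positivity) (mul_nonneg hε hab0) two_ne_zero, mul_pow,
    Real.sq_sqrt (by positivity [mul_nonneg (mul_nonneg hm ha0) hb0])]
  calc (2 ^ k) ^ 2 * (2 ^ (d + 1) * m * a * b) = (2 ^ (d + 1) * (2 ^ k) ^ 2) * r ^ 3 * (a * b) := by
        rw [hrpow, Nat.cast_ofNat, div_self three_ne_zero, Real.rpow_one]; ring
    _ ≤ ε ^ 2 * r * r ^ 3 * (a * b) :=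
        mul_le_mul_of_nonneg_right
          (mul_le_mul_of_nonneg_right (hpow.trans hεm) (pow_nonneg hr0 3)) hab0
    _ = ε ^ 2 * r ^ 4 * (a * b) := by ring
    _ ≤ ε ^ 2 * (a * b) * (a * b) :=
        mul_le_mul_of_nonneg_right (mul_le_mul_of_nonneg_left hab (sq_nonneg ε)) hab0
    _ = (ε * (a * b)) ^ 2 := by ring

namespace Rmd

def fieldDim (d m : ℕ) : ℕ := d + Nat.log 2 m + 1

abbrev F (d m : ℕ) := GaloisField 2 (fieldDim d m)

noncomputable instance (d m : ℕ) : Fintype (F d m) := Fintype.ofFinite _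

variable {d m : ℕ}

theorem card_field : Fintype.card (F d m) = 2 ^ fieldDim d m := by
  rw [← Nat.card_eq_fintype_card, GaloisField.card 2 _ (by simp [fieldDim])]

theorem le_card_field : m ≤ Fintype.card (F d m) := by
  rw [card_field, fieldDim]
  exact (Nat.lt_pow_succ_log_self one_lt_two m).le.trans
    (Nat.pow_le_pow_right two_pos (by omega))

theorem card_field_le (hm : m ≠ 0) : Fintype.card (F d m) ≤ 2 ^ (d + 1) * m := by
  rw [card_field, fieldDim, show d + Nat.log 2 m + 1 = d + 1 + Nat.log 2 m by ring, pow_add]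
  exact Nat.mul_le_mul_left _ (Nat.pow_log_le_self 2 hm)

noncomputable def embedding (d m : ℕ) : Fin m ↪ F d m :=
  (Fin.castLEEmb le_card_field).trans (Fintype.equivFin _).symm.toEmbedding

noncomputable def coords (d m k : ℕ) (hk : k ≤ fieldDim d m) : F d m →ₗ[ZMod 2] (Fin k → ZMod 2) :=
  LinearMap.funLeft _ _ (Fin.castLE hk) ∘ₗ
    (Module.finBasisOfFinrankEq (ZMod 2) (F d m)
      (GaloisField.finrank 2 (by simp [fieldDim]))).equivFun.toLinearMap

theorem coords_surjective (k : ℕ) (hk : k ≤ fieldDim d m) :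
    Function.Surjective (coords d m k hk) := by
  rw [coords, LinearMap.coe_comp]
  exact (LinearMap.funLeft_surjective_of_injective _ _ _ (Fin.castLE_injective hk)).comp
    (LinearEquiv.surjective _)

theorem sub_le_fieldDim (k : ℕ) : d - k ≤ fieldDim d m := by unfold fieldDim; omega

def rel (d m ℓ : ℕ) (p q : Fin m) : Prop :=
  coords d m (d - ℓ) (sub_le_fieldDim ℓ) (embedding d m p * embedding d m q) = 0

theorem abs_ncard_rel_sub_le (ℓ : ℕ) (hm : m ≠ 0) (P Q : Finset (Fin m)) :
    |2 ^ (d - ℓ) * {pq : Fin m × Fin m | pq.1 ∈ P ∧ pq.2 ∈ Q ∧ rel d m ℓ pq.1 pq.2}.ncard -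
        (#P * #Q : ℝ)| ≤ 2 ^ (d - ℓ) * √(2 ^ (d + 1) * m * #P * #Q) := by
  let e := embedding d m
  let L := (coords d m (d - ℓ) (sub_le_fieldDim ℓ)).toAddMonoidHom
  have hcount : {pq : Fin m × Fin m | pq.1 ∈ P ∧ pq.2 ∈ Q ∧ rel d m ℓ pq.1 pq.2}.ncard =
      #{z ∈ P.map e ×ˢ Q.map e | L (z.1 * z.2) = 0} := by
    rw [← prodMap_map_product, filter_map, card_map, ← Set.ncard_coe_finset, coe_filter]
    simp [rel, L, e, and_assoc]
  have hF : (Fintype.card (F d m) : ℝ) ≤ 2 ^ (d + 1) * m := by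
    exact_mod_cast card_field_le hm
  have h := abs_card_filter_mul_eq_zero_sub_le L (coords_surjective _ _) (P.map e) (Q.map e)
  simp only [card_map, Fintype.card_fun, ZMod.card, Fintype.card_fin, Nat.cast_pow,
    Nat.cast_ofNat] at h
  have h2 : (0 : ℝ) < 2 ^ (d - ℓ) := by positivity
  rw [hcount, show (2 : ℝ) ^ (d - ℓ) * #{z ∈ P.map e ×ˢ Q.map e | L (z.1 * z.2) = 0} - #P * #Q =
    2 ^ (d - ℓ) * (#{z ∈ P.map e ×ˢ Q.map e | L (z.1 * z.2) = 0} - #P * #Q / 2 ^ (d - ℓ)) by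
    field_simp, abs_mul, abs_of_pos h2]
  gcongr
  exact h.trans (Real.sqrt_le_sqrt (by gcongr))

theorem abs_ncard_rel_sub_le_mul (ℓ : ℕ) (hm : m ≠ 0) {ε : ℝ} (hε : 0 ≤ ε)
    (hεm : 2 ^ (3 * d + 1) ≤ ε ^ 2 * (m : ℝ) ^ ((1 : ℝ) / 3)) {P Q : Finset (Fin m)}
    (hP : (m : ℝ) ^ ((2 : ℝ) / 3) ≤ #P) (hQ : (m : ℝ) ^ ((2 : ℝ) / 3) ≤ #Q) :
    |2 ^ (d - ℓ) * {pq : Fin m × Fin m | pq.1 ∈ P ∧ pq.2 ∈ Q ∧ rel d m ℓ pq.1 pq.2}.ncard -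
        (#P * #Q : ℝ)| ≤ ε * (#P * #Q) :=
  (abs_ncard_rel_sub_le ℓ hm P Q).trans
    (two_pow_mul_sqrt_le (Nat.sub_le d ℓ) (Nat.cast_nonneg m) hε hεm hP hQ)

end Rmd

def Rmd (d m : ℕ) : SimpleGraph (BlockVert d m) :=
  cubeBlowup (Rmd.rel d m) fun _ => ⟨fun _ _ h => by rwa [Rmd.rel, mul_comm]⟩

namespace Rmd

variable {d m : ℕ} {ε : ℝ}

theorem propI (hm : m ≠ 0) (hε : 0 ≤ ε)
    (hεm : 2 ^ (3 * d + 1) ≤ ε ^ 2 * (m : ℝ) ^ ((1 : ℝ) / 3)) : PropI (Rmd d m) ε := by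
  intro ℓ hℓ
  have hmP : (m : ℝ) ^ ((2 : ℝ) / 3) ≤ #(univ : Finset (Fin m)) := by
    rw [card_univ, Fintype.card_fin]
    exact Real.rpow_le_self_of_one_le (by exact_mod_cast Nat.one_le_iff_ne_zero.2 hm) (by norm_num)
  have h := abs_le.1 (abs_ncard_rel_sub_le_mul ℓ hm hε hεm hmP hmP)
  simp only [mem_univ, true_and, card_univ, Fintype.card_fin] at h
  have hcount : (levelCountB (Rmd d m) ℓ : ℝ) = 2 ^ (d - 1) *
      (2 ^ (d - ℓ) * {pq : Fin m × Fin m | rel d m ℓ pq.1 pq.2}.ncard) := by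
    rw [Rmd, levelCountB_cubeBlowup, ncard_lt_atLevel hℓ, ← mul_assoc, ← pow_add,
      show d - 1 + (d - ℓ) = 2 * d - ℓ - 1 by rw [mem_Icc] at hℓ; omega]
    push_cast
    rfl
  have h2 : (0 : ℝ) < 2 ^ (d - 1) := by positivity
  rw [hcount]
  constructor <;> nlinarith

theorem propII (hm : m ≠ 0) (hε : 0 ≤ ε)
    (hεm : 2 ^ (3 * d + 1) ≤ ε ^ 2 * (m : ℝ) ^ ((1 : ℝ) / 3)) : PropII (Rmd d m) ε := by
  intro x y ℓ hxy P Q hP hQ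
  have hset : {pq : Fin m × Fin m | pq.1 ∈ P ∧ pq.2 ∈ Q ∧
      (Rmd d m).Adj (toLex (x, pq.1)) (toLex (y, pq.2))} =
      {pq : Fin m × Fin m | pq.1 ∈ P ∧ pq.2 ∈ Q ∧ rel d m ℓ pq.1 pq.2} := by
    simp_rw [Rmd, cubeBlowup_adj_toLex hxy]
  have hpow : (2 : ℝ) ^ ((ℓ : ℤ) - d) = ((2 : ℝ) ^ (d - ℓ))⁻¹ := by
    rw [← zpow_natCast, ← zpow_neg, Nat.cast_sub (mem_Icc.1 hxy.mem_Icc).2, neg_sub]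
  have h := (abs_le.1 (abs_ncard_rel_sub_le_mul ℓ hm hε hεm hP hQ)).2
  rw [hset, hpow, mul_assoc, mul_assoc, inv_mul_eq_div, ← mul_div_assoc,
    le_div_iff₀ (by positivity)]
  linarith

end Rmd

/-- For every `d` there is a family of graphs `R(m,d)` on `{0,1}^d × [m]`
such that for every `ε > 0` and all sufficiently large `m`, property (i) holds with accuracy
`ε` (together with the consequent bound on the total number of edges), and property (ii)
holds with accuracy `ε`. -/
theorem exists_Rmd_family (d : ℕ) :
    ∃ R : ∀ m : ℕ, SimpleGraph (BlockVert d m),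
      ∀ ε : ℝ, 0 < ε → ∃ m₀ : ℕ, ∀ m ≥ m₀,
        PropI (R m) ε ∧
        (1 - ε) * (d : ℝ) * 2 ^ (d - 1) * (m : ℝ) ^ 2 ≤ (edgeCount (R m) : ℝ) ∧
        (edgeCount (R m) : ℝ) ≤ (1 + ε) * (d : ℝ) * 2 ^ (d - 1) * (m : ℝ) ^ 2 ∧
        PropII (R m) ε := by
  refine ⟨Rmd d, fun ε hε => ?_⟩
  have hlarge : ∀ᶠ m : ℕ in Filter.atTop,
      2 ^ (3 * d + 1) / ε ^ 2 ≤ (m : ℝ) ^ ((1 : ℝ) / 3) ∧ 1 ≤ m :=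
    (((tendsto_rpow_atTop (by norm_num)).comp tendsto_natCast_atTop_atTop).eventually_ge_atTop
      _).and (Filter.eventually_ge_atTop 1)
  obtain ⟨m₀, hm₀⟩ := Filter.eventually_atTop.1 hlarge
  refine ⟨m₀, fun m hm => ?_⟩
  obtain ⟨hroot, hm⟩ := hm₀ m hm
  have hεm : 2 ^ (3 * d + 1) ≤ ε ^ 2 * (m : ℝ) ^ ((1 : ℝ) / 3) := by
    rwa [div_le_iff₀' (by positivity)] at hroot
  have hI := Rmd.propI (by omega) hε.le hεm
  exact ⟨hI, hI.le_edgeCount fun _ _ => fst_ne_of_cubeBlowup_adj,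
    hI.edgeCount_le fun _ _ => fst_ne_of_cubeBlowup_adj, Rmd.propII (by omega) hε.le hεm⟩
end

section
/- Every ordered graph F on k vertices that does not contain a monotone path of length two is an ordered subgraph of H_k; that is, there is a strictly order-preserving injection from V(F) to V(H_k) mapping every edge of F to an edge of H_k. -/
/-!
Send a vertex `v` of `F` to `(e v, b v)`, where `e : α → Fin k` is strictly monotone and
`b v` records whether `v` has a neighbour below it. If `u < v` is an edge then `v` has a lower
neighbour, while `u` has none, since otherwise `u` would be the middle vertex of a monotone path
of length two. Hence every edge goes to some `(x, false)(y, true)` with `x < y`, an edge of `H_k`.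
-/

open scoped Classical

section

variable {α : Type*} [LinearOrder α]

def HasLowerNeighbor (F : SimpleGraph α) (v : α) : Prop :=
  ∃ w, w < v ∧ F.Adj w v

lemma not_hasLowerNeighbor_of_lt_of_adj {F : SimpleGraph α} (hF : ¬ HasMonotonePathTwo F)
    {u v : α} (huv : u < v) (hadj : F.Adj u v) : ¬ HasLowerNeighbor F u :=
  fun ⟨w, hwu, hwadj⟩ => hF ⟨w, u, v, hwu, huv, hwadj, hadj⟩

lemma Hgraph_adj_of_lt {k : ℕ} {x y : Fin k} (hxy : x < y) :
    (Hgraph k).Adj (toLex (x, false)) (toLex (y, true)) :=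
  ⟨fun h => hxy.ne (congrArg (fun p => (ofLex p).1) h), Or.inl ⟨rfl, rfl, hxy.le⟩⟩

lemma containsOrderedCopy_Hgraph_of_strictMono {F : SimpleGraph α} (hF : ¬ HasMonotonePathTwo F)
    {k : ℕ} {e : α → Fin k} (he : StrictMono e) : ContainsOrderedCopy F (Hgraph k) := by
  let φ : α → Lex (Fin k × Bool) := fun v => toLex (e v, decide (HasLowerNeighbor F v))
  have hφ : ∀ u v, u < v → F.Adj u v → (Hgraph k).Adj (φ u) (φ v) := by
    intro u v huv hadj
    have hu : decide (HasLowerNeighbor F u) = false :=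
      decide_eq_false (not_hasLowerNeighbor_of_lt_of_adj hF huv hadj)
    have hv : decide (HasLowerNeighbor F v) = true := decide_eq_true ⟨u, huv, hadj⟩
    simpa only [φ, hu, hv] using Hgraph_adj_of_lt (he huv)
  refine ⟨φ, fun u v huv => Prod.Lex.left _ _ (he huv), fun u v hadj => ?_⟩
  rcases lt_or_gt_of_ne (F.ne_of_adj hadj) with h | h
  · exact hφ u v h hadj
  · exact (hφ v u h hadj.symm).symm

end

/-- Every ordered graph `F` on `k` vertices with no monotone path of length
two is an ordered subgraph of `H_k`. -/
theorem embeds_in_Hk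
    {α : Type*} [Fintype α] [LinearOrder α] (F : SimpleGraph α)
    (k : ℕ) (hk : Fintype.card α = k)
    (hF : ¬ HasMonotonePathTwo F) :
    ContainsOrderedCopy F (Hgraph k) :=
  containsOrderedCopy_Hgraph_of_strictMono hF (monoEquivOfFin α hk).symm.strictMono
end

section
/- Every ordered graph F on k vertices that does not contain a monotone path of length two satisfies ρ_<(F) ≤ ρ_<(H_k). -/
open scoped Classical

/-!
Label each vertex `v` of `F` by whether it has a neighbour to its left. Without a monotone path
of length two, every edge `u < v` of `F` joins a vertex labelled `false` to one labelled `true`,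
so `v ↦ (rank v, label v)` is an ordered copy of `F` in `H_k`. Containment is transitive, so
every `H_k`-free subgraph of a host is also `F`-free; hence `ρ_<(F, G) ≤ ρ_<(H_k, G)` for every
host `G`, and taking the infimum over hosts gives the claim.
-/

lemma ContainsOrderedCopy.trans {α β γ : Type*} [Preorder α] [Preorder β] [Preorder γ]
    {F : SimpleGraph α} {H : SimpleGraph β} {G : SimpleGraph γ}
    (hFH : ContainsOrderedCopy F H) (hHG : ContainsOrderedCopy H G) :
    ContainsOrderedCopy F G := by
  obtain ⟨φ, hφ, hφadj⟩ := hFH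
  obtain ⟨ψ, hψ, hψadj⟩ := hHG
  exact ⟨ψ ∘ φ, hψ.comp hφ, fun u v h => hψadj _ _ (hφadj u v h)⟩

lemma containsOrderedCopy_Hgraph {α : Type*} [Fintype α] [LinearOrder α] {F : SimpleGraph α}
    {k : ℕ} (hk : Fintype.card α = k) (hF : ¬ HasMonotonePathTwo F) :
    ContainsOrderedCopy F (Hgraph k) := by
  let rank : α ≃o Fin k := (monoEquivOfFin α hk).symm
  let hasLeftNeighbour (v : α) : Bool := decide (∃ u, u < v ∧ F.Adj u v)
  let φ (v : α) : Lex (Fin k × Bool) := toLex (rank v, hasLeftNeighbour v)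
  have adj_of_lt : ∀ u v, u < v → F.Adj u v → (Hgraph k).Adj (φ u) (φ v) := by
    intro u v huv hadj
    have hu : hasLeftNeighbour u = false :=
      decide_eq_false fun ⟨w, hwu, hw⟩ => hF ⟨w, u, v, hwu, huv, hw, hadj⟩
    have hv : hasLeftNeighbour v = true := decide_eq_true ⟨u, huv, hadj⟩
    rw [Hgraph, SimpleGraph.fromRel_adj]
    refine ⟨fun h => huv.ne (rank.injective (congrArg (fun x => (ofLex x).1) h)), Or.inl ?_⟩
    exact ⟨hu, hv, (rank.strictMono huv).le⟩
  refine ⟨φ, fun u v huv => Prod.Lex.lt_iff.mpr (Or.inl (rank.strictMono huv)),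
    fun u v hadj => ?_⟩
  rcases hadj.ne.lt_or_gt with h | h
  · exact adj_of_lt u v h hadj
  · exact (adj_of_lt v u h hadj.symm).symm

lemma edgeCount_coe_le {β : Type*} [Finite β] {G : SimpleGraph β} (G' : G.Subgraph) :
    edgeCount G'.coe ≤ edgeCount G := by
  unfold edgeCount
  rw [← Set.ncard_image_of_injective _ (Sym2.map.injective Subtype.val_injective),
    G'.image_coe_edgeSet_coe]
  exact Set.ncard_le_ncard G'.edgeSet_subset (Set.toFinite _)

lemma relTuranDensityIn_nonneg {α β : Type*} [Preorder α] [Preorder β]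
    (F : SimpleGraph α) (G : SimpleGraph β) : 0 ≤ relTuranDensityIn F G :=
  Real.sSup_nonneg fun _ ⟨_, _, hr⟩ => hr ▸ by positivity

lemma relTuranDensityIn_le_of_containsOrderedCopy {α α' β : Type*} [Preorder α] [Preorder α']
    [Preorder β] [Finite β] {F : SimpleGraph α} {H : SimpleGraph α'} (G : SimpleGraph β)
    (hFH : ContainsOrderedCopy F H) :
    relTuranDensityIn F G ≤ relTuranDensityIn H G := by
  unfold relTuranDensityIn
  have hsub : {r : ℝ | ∃ G' : G.Subgraph, ¬ ContainsOrderedCopy F G'.coe ∧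
        r = (edgeCount G'.coe : ℝ) / (edgeCount G : ℝ)} ⊆
      {r : ℝ | ∃ G' : G.Subgraph, ¬ ContainsOrderedCopy H G'.coe ∧
        r = (edgeCount G'.coe : ℝ) / (edgeCount G : ℝ)} := by
    rintro r ⟨G', hfree, rfl⟩
    exact ⟨G', fun hH => hfree (hFH.trans hH), rfl⟩
  rcases Set.eq_empty_or_nonempty
    {r : ℝ | ∃ G' : G.Subgraph, ¬ ContainsOrderedCopy F G'.coe ∧
      r = (edgeCount G'.coe : ℝ) / (edgeCount G : ℝ)} with hempty | hne
  · rw [hempty, Real.sSup_empty]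
    exact relTuranDensityIn_nonneg H G
  · refine csSup_le_csSup ⟨1, ?_⟩ hne hsub
    rintro r ⟨G', -, rfl⟩
    exact div_le_one_of_le₀ (by exact_mod_cast edgeCount_coe_le G') (Nat.cast_nonneg _)

lemma relTuranDensity_le_of_containsOrderedCopy {α α' : Type*} [Preorder α] [Preorder α']
    {F : SimpleGraph α} {H : SimpleGraph α'} (hFH : ContainsOrderedCopy F H) :
    relTuranDensity F ≤ relTuranDensity H := by
  unfold relTuranDensity
  have hbdd : BddBelow {r : ℝ | ∃ (n : ℕ) (G : SimpleGraph (Fin n)),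
      1 ≤ edgeCount G ∧ r = relTuranDensityIn F G} := by
    refine ⟨0, ?_⟩
    rintro r ⟨n, G, -, rfl⟩
    exact relTuranDensityIn_nonneg F G
  rcases Set.eq_empty_or_nonempty {r : ℝ | ∃ (n : ℕ) (G : SimpleGraph (Fin n)),
      1 ≤ edgeCount G ∧ r = relTuranDensityIn H G} with hempty | hne
  · -- both infima range over the same hosts, so they are empty together
    have hemptyF : {r : ℝ | ∃ (n : ℕ) (G : SimpleGraph (Fin n)),
        1 ≤ edgeCount G ∧ r = relTuranDensityIn F G} = ∅ :=
      Set.eq_empty_of_forall_notMem fun _ ⟨n, G, hG, _⟩ =>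
        hempty.subset ⟨n, G, hG, rfl⟩
    rw [hempty, hemptyF]
  · refine le_csInf hne ?_
    rintro r ⟨n, G, hG, rfl⟩
    exact (csInf_le hbdd ⟨n, G, hG, rfl⟩).trans
      (relTuranDensityIn_le_of_containsOrderedCopy G hFH)

/-- Every ordered graph `F` on `k` vertices with no monotone path of length
two satisfies `ρ_<(F) ≤ ρ_<(H_k)`. -/
theorem rho_le_rho_Hk
    {α : Type*} [Fintype α] [LinearOrder α] (F : SimpleGraph α)
    (k : ℕ) (hk : Fintype.card α = k)
    (hF : ¬ HasMonotonePathTwo F) :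
    relTuranDensity F ≤ relTuranDensity (Hgraph k) :=
  relTuranDensity_le_of_containsOrderedCopy (containsOrderedCopy_Hgraph hk hF)
end

section
/- For all ε > 0 there exists N ∈ ℕ such that for all n > N, all but at most ε·2^n strings x ∈ {0,1}^n have the following property: every integer interval J ⊆ [n] of length at least (ln n)² satisfies |Σ_{i∈J} x_i − |J|/2| < ε·|J|. -/
/-!
Hoeffding's inequality, proved by counting: for a fixed set `J` of `m` coordinates, the
exponential moment `∑ₓ exp (u · (Σ_{i∈J} xᵢ - m/2))` factorizes over the coordinates and is at
most `2ⁿ exp (u² m / 8)`, so Markov's inequality with `u = ±4ε` shows that at most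
`2 · 2ⁿ · exp (-2ε² m)` strings are `ε`-unbalanced on `J`. A union bound over the at most `n²`
intervals of length `m ≥ (ln n)²` leaves `2 n² exp (-2ε² (ln n)²) · 2ⁿ` exceptional strings, and
`n² exp (-2ε² (ln n)²) = exp (2 ln n - 2ε² (ln n)²) → 0`.
-/

open Finset Real Filter Topology

noncomputable def discrepancy {ι : Type*} (J : Finset ι) (x : ι → Bool) : ℝ :=
  (∑ i ∈ J, if x i = true then (1 : ℝ) else 0) - (#J : ℝ) / 2

section Hoeffding

variable {ι : Type*} [Fintype ι] [DecidableEq ι]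

lemma discrepancy_eq_sum (J : Finset ι) (x : ι → Bool) :
    discrepancy J x = ∑ i, if i ∈ J then (if x i = true then (1 : ℝ) else 0) - 1 / 2 else 0 := by
  rw [sum_ite_mem, univ_inter, sum_sub_distrib, sum_const, nsmul_eq_mul, discrepancy]
  ring

lemma sum_exp_mul_discrepancy_le (J : Finset ι) (u : ℝ) :
    ∑ x : ι → Bool, exp (u * discrepancy J x) ≤ 2 ^ Fintype.card ι * exp (u ^ 2 / 8 * #J) := by
  set f : ι → Bool → ℝ := fun i b ↦
    exp (u * if i ∈ J then (if b = true then (1 : ℝ) else 0) - 1 / 2 else 0)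
  have hcoord (i : ι) : ∑ b, f i b ≤ 2 * exp (if i ∈ J then u ^ 2 / 8 else 0) := by
    by_cases hi : i ∈ J
    · -- `exp (u / 2) + exp (-u / 2) = 2 cosh (u / 2)`
      have := cosh_le_exp_half_sq (u / 2)
      simp only [f, hi, if_true, Fintype.sum_bool, if_false, Bool.false_eq_true, cosh_eq] at this ⊢
      ring_nf at this ⊢
      linarith
    · simp [f, hi]
  calc ∑ x : ι → Bool, exp (u * discrepancy J x) = ∏ i, ∑ b, f i b := by
        rw [Fintype.prod_sum]
        refine sum_congr rfl fun x _ ↦ ?_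
        rw [discrepancy_eq_sum, mul_sum, exp_sum]
    _ ≤ ∏ i, 2 * exp (if i ∈ J then u ^ 2 / 8 else 0) :=
        prod_le_prod (fun i _ ↦ sum_nonneg fun b _ ↦ (exp_pos _).le) fun i _ ↦ hcoord i
    _ = 2 ^ Fintype.card ι * exp (u ^ 2 / 8 * #J) := by
        rw [prod_mul_distrib, ← exp_sum, sum_ite_mem, univ_inter, sum_const, nsmul_eq_mul,
          prod_const, card_univ, mul_comm (#J : ℝ)]

open scoped Classical in
lemma card_filter_le_mul_discrepancy_le (J : Finset ι) (u t : ℝ) :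
    (#{x : ι → Bool | t ≤ u * discrepancy J x} : ℝ) ≤
      2 ^ Fintype.card ι * exp (u ^ 2 / 8 * #J - t) := by
  rw [exp_sub, mul_div_assoc', le_div_iff₀ (exp_pos t)]
  calc (#{x : ι → Bool | t ≤ u * discrepancy J x} : ℝ) * exp t
      = ∑ x with t ≤ u * discrepancy J x, exp t := by rw [sum_const, nsmul_eq_mul]
    _ ≤ ∑ x with t ≤ u * discrepancy J x, exp (u * discrepancy J x) :=
        sum_le_sum fun x hx ↦ exp_le_exp.mpr (mem_filter.mp hx).2
    _ ≤ ∑ x, exp (u * discrepancy J x) :=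
        sum_le_sum_of_subset_of_nonneg (filter_subset _ _) fun x _ _ ↦ (exp_pos _).le
    _ ≤ _ := sum_exp_mul_discrepancy_le J u

open scoped Classical in
lemma card_filter_le_abs_discrepancy_le (J : Finset ι) {ε : ℝ} (hε : 0 ≤ ε) :
    (#{x : ι → Bool | ε * #J ≤ |discrepancy J x|} : ℝ) ≤
      2 * 2 ^ Fintype.card ι * exp (-(2 * ε ^ 2 * #J)) := by
  -- Markov's inequality for `exp (±4ε · discrepancy)`; `u = 4ε` optimizes the exponent
  have hsplit : ({x : ι → Bool | ε * #J ≤ |discrepancy J x|} : Finset (ι → Bool)) ⊆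
      ({x | 4 * ε ^ 2 * #J ≤ 4 * ε * discrepancy J x} : Finset (ι → Bool)) ∪
        ({x | 4 * ε ^ 2 * #J ≤ -(4 * ε) * discrepancy J x} : Finset (ι → Bool)) := by
    intro x hx
    simp only [mem_union, mem_filter, mem_univ, true_and] at hx ⊢
    rcases le_abs'.mp hx with h | h
    · right; nlinarith [mul_le_mul_of_nonneg_left h hε]
    · left; nlinarith [mul_le_mul_of_nonneg_left h hε]
  have hexp (u : ℝ) (hu : u ^ 2 = 16 * ε ^ 2) :
      u ^ 2 / 8 * #J - 4 * ε ^ 2 * #J = -(2 * ε ^ 2 * #J) := by rw [hu]; ring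
  calc (#{x : ι → Bool | ε * #J ≤ |discrepancy J x|} : ℝ)
      ≤ #{x : ι → Bool | 4 * ε ^ 2 * #J ≤ 4 * ε * discrepancy J x} +
          #{x : ι → Bool | 4 * ε ^ 2 * #J ≤ -(4 * ε) * discrepancy J x} := by
        exact_mod_cast (card_le_card hsplit).trans (card_union_le _ _)
    _ ≤ 2 ^ Fintype.card ι * exp (-(2 * ε ^ 2 * #J)) +
          2 ^ Fintype.card ι * exp (-(2 * ε ^ 2 * #J)) := by
        gcongr
        · exact (card_filter_le_mul_discrepancy_le J _ _).trans_eq (by rw [hexp _ (by ring)])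
        · exact (card_filter_le_mul_discrepancy_le J _ _).trans_eq (by rw [hexp _ (by ring)])
    _ = _ := by ring

open scoped Classical in
lemma card_filter_exists_le_abs_discrepancy_le {κ : Type*} (K : Finset κ) (J : κ → Finset ι)
    {ε L : ℝ} (hε : 0 ≤ ε) (hL : ∀ k ∈ K, L ≤ #(J k)) :
    (#{x : ι → Bool | ∃ k ∈ K, ε * #(J k) ≤ |discrepancy (J k) x|} : ℝ) ≤
      #K * (2 * 2 ^ Fintype.card ι * exp (-(2 * ε ^ 2 * L))) := by
  have hunion : ({x : ι → Bool | ∃ k ∈ K, ε * #(J k) ≤ |discrepancy (J k) x|} :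
      Finset (ι → Bool)) ⊆
      K.biUnion fun k ↦ {x | ε * #(J k) ≤ |discrepancy (J k) x|} := by
    intro x hx
    simpa using hx
  calc (#{x : ι → Bool | ∃ k ∈ K, ε * #(J k) ≤ |discrepancy (J k) x|} : ℝ)
      ≤ ∑ k ∈ K, (#{x : ι → Bool | ε * #(J k) ≤ |discrepancy (J k) x|} : ℝ) := by
        exact_mod_cast (card_le_card hunion).trans card_biUnion_le
    _ ≤ ∑ k ∈ K, 2 * 2 ^ Fintype.card ι * exp (-(2 * ε ^ 2 * L)) := by
        refine sum_le_sum fun k hk ↦ (card_filter_le_abs_discrepancy_le (J k) hε).trans ?_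
        gcongr
        exact hL k hk
    _ = _ := by rw [sum_const, nsmul_eq_mul]

end Hoeffding

lemma tendsto_sq_mul_exp_neg_mul_log_sq {c : ℝ} (hc : 0 < c) :
    Tendsto (fun n : ℕ ↦ (n : ℝ) ^ 2 * exp (-(c * log n ^ 2))) atTop (𝓝 0) := by
  have hlog : Tendsto (fun n : ℕ ↦ log n) atTop atTop :=
    tendsto_log_atTop.comp tendsto_natCast_atTop_atTop
  have hexponent : Tendsto (fun l : ℝ ↦ l * (2 + -(c * l))) atTop atBot :=
    tendsto_id.atTop_mul_atBot₀ <| tendsto_atBot_add_const_left _ 2 <|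
      tendsto_neg_atBot_iff.mpr (tendsto_id.const_mul_atTop hc)
  refine (tendsto_exp_atBot.comp (hexponent.comp hlog)).congr' ?_
  filter_upwards [eventually_gt_atTop 0] with n hn
  have hn' : (0 : ℝ) < n := by exact_mod_cast hn
  simp only [Function.comp_apply]
  rw [← exp_log (pow_pos hn' 2), ← exp_add, log_pow]
  ring_nf

/-- For every `ε > 0` there is `N` such that for all `n > N`, all but at
most `ε·2^n` strings `x ∈ {0,1}^n` satisfy: every integer interval `J ⊆ [n]` of length at
least `(ln n)²` has `|Σ_{i∈J} x_i − |J|/2| < ε·|J|`. -/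
theorem locally_balanced (ε : ℝ) (hε : 0 < ε) :
    ∃ N : ℕ, ∀ n : ℕ, n > N →
      ({x : Fin n → Bool | ¬ ∀ a b : Fin n,
          Real.log n ^ 2 ≤ ((Finset.Icc a b).card : ℝ) →
          |(∑ i ∈ Finset.Icc a b, if x i = true then (1 : ℝ) else 0) -
              ((Finset.Icc a b).card : ℝ) / 2| < ε * ((Finset.Icc a b).card : ℝ)}.ncard : ℝ)
        ≤ ε * 2 ^ n := by
  obtain ⟨N, hN⟩ := eventually_atTop.mp <|
    ((tendsto_sq_mul_exp_neg_mul_log_sq (c := 2 * ε ^ 2) (by positivity)).const_mul 2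
      |>.eventually_lt_const (by simpa using hε))
  refine ⟨N, fun n hn ↦ ?_⟩
  classical
  set K : Finset (Fin n × Fin n) := {p | log n ^ 2 ≤ #(Icc p.1 p.2)}
  have hK : (#K : ℝ) ≤ n ^ 2 := by
    exact_mod_cast (card_filter_le _ _).trans_eq (by simp [sq])
  calc _ = (#{x : Fin n → Bool | ∃ p ∈ K, ε * #(Icc p.1 p.2) ≤
          |discrepancy (Icc p.1 p.2) x|} : ℝ) := by
        rw [← Set.ncard_coe_finset]
        congr
        ext x
        simp [K, discrepancy]
    _ ≤ #K * (2 * 2 ^ Fintype.card (Fin n) * exp (-(2 * ε ^ 2 * log n ^ 2))) :=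
        card_filter_exists_le_abs_discrepancy_le K _ hε.le fun p hp ↦ (mem_filter.mp hp).2
    _ ≤ n ^ 2 * (2 * 2 ^ n * exp (-(2 * ε ^ 2 * log n ^ 2))) := by
        rw [Fintype.card_fin]
        gcongr
    _ = 2 * (n ^ 2 * exp (-(2 * ε ^ 2 * log n ^ 2))) * 2 ^ n := by ring
    _ ≤ ε * 2 ^ n := by gcongr; exact (hN n hn.le).le
end

section
/- For all α > 0, ε > 0, and k ∈ ℕ, there exist η > 0 and N ∈ ℕ such that for all n > N the following holds. Suppose f : [n] → [0,1] has the property that for every integer interval J ⊆ [n] of length at least ⌊η·n⌋, the average of f over J satisfies |(1/|J|)·Σ_{t∈J} f(t) − α| ≤ η. Then for all x, y ∈ [k], Σ_{t=⌈η·n⌉}^{⌊(1−η)·n⌋} f(t)·C(t−1, x)·C(n−t, y) ≥ (1−ε)·α·C(n, x+y+1). -/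
/-!
The weights `C(t-1, x) C(n-t, y)`, `1 ≤ t ≤ n`, sum to `C(n, x+y+1)`, are at most `n^(x+y)`, and
change by at most `n^(x+y-1)` from `t` to `t+1`. Cut `[⌈ηn⌉, ⌊(1-η)n⌋]` into blocks of length
`⌊ηn⌋`: on each block the weight is nearly constant while `f` has average at least `α - η`, so
the block contributes at least `(α - η)` times its total weight, up to `O(η n^(x+y))`. The two
discarded ends and the last incomplete block carry weight `O(ηn · n^(x+y))`. Since
`n^(x+y+1) = O(C(n, x+y+1))`, every error is a small multiple of `C(n, x+y+1)` once `η` is small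
and `n` is large.
-/

open Finset

theorem Nat.sum_range_choose_mul_choose_sub (n x y : ℕ) :
    ∑ i ∈ range n, i.choose x * (n - 1 - i).choose y = n.choose (x + y + 1) := by
  induction n generalizing y with
  | zero => simp
  | succ n ih =>
    rw [sum_range_succ, Nat.add_sub_cancel, Nat.sub_self]
    cases y with
    | zero =>
      have h0 := ih 0
      simp only [Nat.choose_zero_right, mul_one] at h0 ⊢
      rw [h0, add_zero, Nat.choose_succ_succ' n x, add_comm]
    | succ y =>
      have pascal : ∀ i ∈ range n, i.choose x * (n - i).choose (y + 1) =
          i.choose x * (n - 1 - i).choose y + i.choose x * (n - 1 - i).choose (y + 1) := by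
        intro i hi
        rw [show n - i = n - 1 - i + 1 by have := mem_range.mp hi; omega, Nat.choose_succ_succ,
          Nat.mul_add]
      rw [sum_congr rfl pascal, sum_add_distrib, ih, ih, Nat.choose_zero_succ, mul_zero, add_zero,
        show x + (y + 1) + 1 = x + y + 1 + 1 by ring, Nat.choose_succ_succ' n]

theorem Nat.pow_le_two_mul_pow_mul_choose {n K : ℕ} (hK : 2 * K ≤ n) :
    n ^ K ≤ (2 * K) ^ K * n.choose K :=
  calc n ^ K ≤ (2 * (n + 1 - K)) ^ K := Nat.pow_le_pow_left (by omega) K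
    _ = 2 ^ K * (n + 1 - K) ^ K := Nat.mul_pow ..
    _ ≤ 2 ^ K * (K.factorial * n.choose K) := by
      rw [← Nat.descFactorial_eq_factorial_mul_choose]
      exact Nat.mul_le_mul_left _ (n.pow_sub_le_descFactorial K)
    _ ≤ 2 ^ K * (K ^ K * n.choose K) := by gcongr; exact Nat.factorial_le_pow K
    _ = (2 * K) ^ K * n.choose K := by rw [Nat.mul_pow, mul_assoc]

theorem Nat.cast_choose_le_pow_of_le {m n : ℕ} (h : m ≤ n) (r : ℕ) :
    (m.choose r : ℝ) ≤ (n : ℝ) ^ r := by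
  exact_mod_cast (Nat.choose_le_pow m r).trans (Nat.pow_le_pow_left h r)

theorem sub_mul_card_le_sum_of_abs_average_sub_le {ι : Type*} {s : Finset ι} {f : ι → ℝ}
    {a η : ℝ} (hs : s.Nonempty) (h : |(∑ i ∈ s, f i) / #s - a| ≤ η) :
    (a - η) * #s ≤ ∑ i ∈ s, f i := by
  rw [← le_div_iff₀ (by exact_mod_cast hs.card_pos)]
  linarith [(abs_le.mp h).1]

theorem abs_sub_le_mul_of_abs_succ_sub_le {W : ℕ → ℝ} {A B : ℕ} {D : ℝ}
    (hstep : ∀ t ∈ Ico A B, |W (t + 1) - W t| ≤ D) {s t : ℕ} (hs : A ≤ s) (hst : s ≤ t)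
    (ht : t ≤ B) : |W t - W s| ≤ (t - s : ℕ) * D := by
  have := dist_le_Ico_sum_of_dist_le (f := W) hst (d := fun _ => D) fun hsk hkt => by
    rw [dist_comm, Real.dist_eq]; exact hstep _ (mem_Ico.mpr ⟨by omega, by omega⟩)
  rwa [sum_const, Nat.card_Ico, nsmul_eq_mul, dist_comm, Real.dist_eq] at this

theorem mul_sum_sub_le_sum_mul {ι : Type*} {s : Finset ι} {f W : ι → ℝ} {c δ : ℝ} (hc : 0 ≤ c)
    (hf : ∀ t ∈ s, 0 ≤ f t) (hW : ∀ t ∈ s, 0 ≤ W t) (hvar : ∀ t ∈ s, ∀ t' ∈ s, W t' ≤ W t + δ)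
    (havg : c * #s ≤ ∑ t ∈ s, f t) :
    c * (∑ t ∈ s, W t - #s * δ) ≤ ∑ t ∈ s, f t * W t := by
  rcases s.eq_empty_or_nonempty with rfl | hs
  · simp
  obtain ⟨t₀, ht₀, hmin⟩ := s.exists_min_image W hs
  have hsum : ∑ t ∈ s, W t ≤ #s * W t₀ + #s * δ := by
    simpa using sum_le_sum fun t ht => hvar t₀ ht₀ t ht
  calc c * (∑ t ∈ s, W t - #s * δ) ≤ c * #s * W t₀ := by nlinarith
    _ ≤ (∑ t ∈ s, f t) * W t₀ := mul_le_mul_of_nonneg_right havg (hW t₀ ht₀)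
    _ ≤ ∑ t ∈ s, f t * W t := by
      rw [sum_mul]; exact sum_le_sum fun t ht => mul_le_mul_of_nonneg_left (hmin t ht) (hf t ht)

section Blocks

variable {f W : ℕ → ℝ} {A B L : ℕ} {c D : ℝ}

theorem le_add_mul_of_abs_succ_sub_le (hD : 0 ≤ D) (hstep : ∀ t ∈ Ico A B, |W (t + 1) - W t| ≤ D)
    {b : ℕ} (hAb : A ≤ b) (hbB : b + L ≤ B + 1) {s t : ℕ} (hs : s ∈ Ico b (b + L))
    (ht : t ∈ Ico b (b + L)) : W t ≤ W s + L * D := by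
  rw [mem_Ico] at hs ht
  have hdist : ∀ u v, b ≤ u → v < b + L → u ≤ v → |W v - W u| ≤ L * D := fun u v hu hv huv =>
    (abs_sub_le_mul_of_abs_succ_sub_le hstep (by omega) huv (by omega)).trans
      (by gcongr; omega)
  rcases le_total s t with hst | hts
  · linarith [le_abs_self (W t - W s), hdist s t hs.1 ht.2 hst]
  · linarith [neg_abs_le (W s - W t), hdist t s ht.1 hs.2 hts]

theorem mul_sum_Ico_sub_le_sum_Ico_mul (hc : 0 ≤ c) (hD : 0 ≤ D)
    (hf : ∀ t ∈ Icc A B, 0 ≤ f t) (hW : ∀ t ∈ Icc A B, 0 ≤ W t)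
    (hstep : ∀ t ∈ Ico A B, |W (t + 1) - W t| ≤ D)
    (havg : ∀ b, A ≤ b → b + L ≤ B + 1 → c * L ≤ ∑ t ∈ Ico b (b + L), f t) :
    ∀ Q, A + Q * L ≤ B + 1 →
      c * (∑ t ∈ Ico A (A + Q * L), W t - Q * L * (L * D)) ≤ ∑ t ∈ Ico A (A + Q * L), f t * W t
  | 0, _ => by simp
  | Q + 1, hQ => by
    set b := A + Q * L
    have hb : A + (Q + 1) * L = b + L := by ring
    rw [hb] at hQ ⊢
    have hblock : c * (∑ t ∈ Ico b (b + L), W t - #(Ico b (b + L)) * (L * D)) ≤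
        ∑ t ∈ Ico b (b + L), f t * W t := by
      have hmem : ∀ t ∈ Ico b (b + L), t ∈ Icc A B := fun t ht => by
        rw [mem_Ico] at ht; exact mem_Icc.mpr ⟨by omega, by omega⟩
      refine mul_sum_sub_le_sum_mul hc (fun t ht => hf t (hmem t ht))
        (fun t ht => hW t (hmem t ht))
        (fun s hs t ht => le_add_mul_of_abs_succ_sub_le hD hstep (by omega) hQ hs ht) ?_
      rw [Nat.card_Ico, Nat.add_sub_cancel_left]
      exact havg b (by omega) hQ
    have ih := mul_sum_Ico_sub_le_sum_Ico_mul hc hD hf hW hstep havg Q (by omega)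
    rw [Nat.card_Ico, Nat.add_sub_cancel_left] at hblock
    rw [← sum_Ico_consecutive _ (by omega : A ≤ b) (by omega : b ≤ b + L),
      ← sum_Ico_consecutive _ (by omega : A ≤ b) (by omega : b ≤ b + L)]
    push_cast
    linarith

theorem mul_sum_Icc_sub_le_sum_Icc_mul {M : ℝ} (hL : 0 < L) (hc : 0 ≤ c) (hD : 0 ≤ D)
    (hM : 0 ≤ M) (hf : ∀ t ∈ Icc A B, 0 ≤ f t) (hW : ∀ t ∈ Icc A B, 0 ≤ W t ∧ W t ≤ M)
    (hstep : ∀ t ∈ Ico A B, |W (t + 1) - W t| ≤ D)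
    (havg : ∀ b, A ≤ b → b + L ≤ B + 1 → c * L ≤ ∑ t ∈ Ico b (b + L), f t) :
    c * (∑ t ∈ Icc A B, W t - L * M - (B + 1 - A : ℕ) * L * D) ≤ ∑ t ∈ Icc A B, f t * W t := by
  rcases lt_or_ge (B + 1) A with hBA | hAB
  · rw [Icc_eq_empty (by omega), sum_empty, sum_empty, Nat.sub_eq_zero_of_le hBA.le]
    push_cast
    nlinarith [mul_nonneg hc (mul_nonneg (Nat.cast_nonneg L) hM)]
  set Q := (B + 1 - A) / L
  have hQ : Q * L ≤ B + 1 - A := Nat.div_mul_le_self _ _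
  have hrem : B + 1 - A < Q * L + L := Nat.lt_div_mul_add hL
  have hblocks := mul_sum_Ico_sub_le_sum_Ico_mul hc hD hf (fun t ht => (hW t ht).1) hstep havg Q
    (by omega)
  rw [← Ico_add_one_right_eq_Icc] at hf hW ⊢
  have htail : ∑ t ∈ Ico (A + Q * L) (B + 1), W t ≤ L * M := by
    refine (sum_le_card_nsmul _ _ M fun t ht => (hW t ?_).2).trans ?_
    · exact Ico_subset_Ico_left (by omega) ht
    rw [Nat.card_Ico, nsmul_eq_mul]
    gcongr
    omega
  have hfW : ∑ t ∈ Ico A (A + Q * L), f t * W t ≤ ∑ t ∈ Ico A (B + 1), f t * W t :=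
    sum_le_sum_of_subset_of_nonneg (Ico_subset_Ico_right (by omega)) fun t ht _ =>
      mul_nonneg (hf t ht) (hW t ht).1
  have hQL : (Q * L : ℕ) * (L * D) ≤ (B + 1 - A : ℕ) * L * D := by
    rw [mul_assoc]; gcongr
  rw [← sum_Ico_consecutive _ (by omega : A ≤ A + Q * L) (by omega : A + Q * L ≤ B + 1)]
  push_cast at hQL
  nlinarith

end Blocks

/-- `C(t-1, x) C(n-t, y)` counts the `(x+y+1)`-subsets of `[n]` whose `(x+1)`-st smallest element
is `t`. -/
noncomputable def pivotWeight (n x y t : ℕ) : ℝ := (t - 1).choose x * (n - t).choose y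

theorem sum_Icc_pivotWeight (n x y : ℕ) :
    ∑ t ∈ Icc 1 n, pivotWeight n x y t = n.choose (x + y + 1) := by
  rw [← Nat.sum_range_choose_mul_choose_sub, ← Ico_add_one_right_eq_Icc, sum_Ico_eq_sum_range,
    Nat.add_sub_cancel, Nat.cast_sum]
  refine sum_congr rfl fun i _ => ?_
  rw [pivotWeight, Nat.add_sub_cancel_left, Nat.cast_mul, show n - (1 + i) = n - 1 - i by omega]

theorem pivotWeight_nonneg (n x y t : ℕ) : 0 ≤ pivotWeight n x y t := by
  unfold pivotWeight; positivity

theorem pivotWeight_le {n t : ℕ} (ht : t ≤ n) (x y : ℕ) :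
    pivotWeight n x y t ≤ (n : ℝ) ^ (x + y) := by
  rw [pivotWeight, pow_add]
  exact mul_le_mul (Nat.cast_choose_le_pow_of_le (by omega) x)
    (Nat.cast_choose_le_pow_of_le (by omega) y) (by positivity) (by positivity)

theorem abs_pivotWeight_succ_sub_le {n x y t : ℕ} (hx : 1 ≤ x) (hy : 1 ≤ y) (ht : 1 ≤ t)
    (htn : t < n) :
    |pivotWeight n x y (t + 1) - pivotWeight n x y t| ≤ (n : ℝ) ^ (x + y - 1) := by
  obtain ⟨p, rfl⟩ : ∃ p, x = p + 1 := ⟨x - 1, by omega⟩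
  obtain ⟨q, rfl⟩ : ∃ q, y = q + 1 := ⟨y - 1, by omega⟩
  obtain ⟨m, hm⟩ : ∃ m, n - t = m + 1 := ⟨n - t - 1, by omega⟩
  -- Pascal's rule in both factors leaves a difference of two products of the same degree.
  have hdiff : pivotWeight n (p + 1) (q + 1) (t + 1) - pivotWeight n (p + 1) (q + 1) t =
      ((t - 1).choose p * m.choose (q + 1) : ℕ) - ((t - 1).choose (p + 1) * m.choose q : ℕ) := by
    rw [pivotWeight, pivotWeight, show n - (t + 1) = m by omega, hm, Nat.add_sub_cancel,
      show t = t - 1 + 1 by omega, Nat.choose_succ_succ', Nat.choose_succ_succ']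
    push_cast
    ring
  have hle : ∀ r s, r + s = p + q + 1 →
      ((t - 1).choose r * m.choose s : ℕ) ≤ (n : ℝ) ^ (p + 1 + (q + 1) - 1) := by
    intro r s hrs
    rw [show p + 1 + (q + 1) - 1 = r + s by omega, pow_add, Nat.cast_mul]
    exact mul_le_mul (Nat.cast_choose_le_pow_of_le (by omega) r)
      (Nat.cast_choose_le_pow_of_le (by omega) s) (by positivity) (by positivity)
  rw [hdiff]
  exact abs_sub_le_of_nonneg_of_le (by positivity) (hle _ _ (by ring)) (by positivity)
    (hle _ _ (by ring))

theorem sum_Icc_pivotWeight_ge (n x y A B : ℕ) :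
    (n.choose (x + y + 1) : ℝ) - ((A - 1 : ℕ) + (n - B : ℕ)) * (n : ℝ) ^ (x + y) ≤
      ∑ t ∈ Icc A B, pivotWeight n x y t := by
  have hout : Icc 1 n \ Icc A B ⊆ Ico 1 A ∪ Ioc B n := fun t ht => by
    simp only [mem_sdiff, mem_Icc, mem_union, mem_Ico, mem_Ioc] at ht ⊢; omega
  have hcard : #(Icc 1 n \ Icc A B) ≤ (A - 1) + (n - B) := by
    simpa using (card_le_card hout).trans (card_union_le _ _)
  have hle : ∑ t ∈ Icc 1 n \ Icc A B, pivotWeight n x y t ≤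
      ((A - 1 : ℕ) + (n - B : ℕ)) * (n : ℝ) ^ (x + y) := by
    refine (sum_le_card_nsmul _ _ _ fun t ht => pivotWeight_le ?_ x y).trans ?_
    · simp only [mem_sdiff, mem_Icc] at ht; omega
    rw [nsmul_eq_mul]
    gcongr
    exact_mod_cast hcard
  have hin : ∑ t ∈ Icc 1 n ∩ Icc A B, pivotWeight n x y t ≤ ∑ t ∈ Icc A B, pivotWeight n x y t :=
    sum_le_sum_of_subset_of_nonneg inter_subset_right fun t _ _ => pivotWeight_nonneg n x y t
  rw [← sum_Icc_pivotWeight, ← sum_inter_add_sum_sdiff (Icc 1 n) (Icc A B)]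
  linarith

theorem sub_mul_le_sum_Ico_of_abs_average_sub_le {f : ℕ → ℝ} {n L : ℕ} {a η : ℝ} (hL : 0 < L)
    (havg : ∀ s t : ℕ, 1 ≤ s → t ≤ n → L ≤ #(Icc s t) →
      |(∑ u ∈ Icc s t, f u) / #(Icc s t) - a| ≤ η)
    {b : ℕ} (hb : 1 ≤ b) (hbn : b + L ≤ n + 1) : (a - η) * L ≤ ∑ t ∈ Ico b (b + L), f t := by
  have hI : Icc b (b + L - 1) = Ico b (b + L) := by
    rw [← Ico_add_one_right_eq_Icc, Nat.sub_add_cancel (by omega)]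
  have hcard : #(Ico b (b + L)) = L := by simp
  have h := havg b (b + L - 1) hb (by omega) (by rw [hI, hcard])
  rw [hI] at h
  simpa [hcard] using sub_mul_card_le_sum_of_abs_average_sub_le (by simp; omega) h

theorem mul_sub_le_sum_mul_pivotWeight {n x y : ℕ} (hx : 1 ≤ x) (hy : 1 ≤ y) {a η : ℝ}
    (hηa : η ≤ a) (hηn : 1 ≤ η * n) {f : ℕ → ℝ} (hf : ∀ t ∈ Icc 1 n, 0 ≤ f t)
    (havg : ∀ s t : ℕ, 1 ≤ s → t ≤ n → ⌊η * n⌋₊ ≤ #(Icc s t) →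
      |(∑ u ∈ Icc s t, f u) / #(Icc s t) - a| ≤ η) :
    (a - η) * (n.choose (x + y + 1) - (4 * η * n + 1) * (n : ℝ) ^ (x + y)) ≤
      ∑ t ∈ Icc ⌈η * n⌉₊ ⌊(1 - η) * n⌋₊, f t * pivotWeight n x y t := by
  set A := ⌈η * n⌉₊
  set B := ⌊(1 - η) * n⌋₊
  set L := ⌊η * n⌋₊
  have hη : 0 < η := pos_of_mul_pos_left (by linarith) (Nat.cast_nonneg n)
  have hA : 1 ≤ A := Nat.ceil_pos.mpr (by linarith)
  have hAr : ((A - 1 : ℕ) : ℝ) ≤ η * n := by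
    rw [Nat.cast_sub hA, Nat.cast_one]; linarith [Nat.ceil_lt_add_one (by linarith : 0 ≤ η * n)]
  have hBn : B ≤ n := Nat.floor_le_of_le (by linarith [show (1 - η) * n = n - η * n by ring])
  have hBr : ((n - B : ℕ) : ℝ) ≤ η * n + 1 := by
    rw [Nat.cast_sub hBn]; linarith [Nat.lt_floor_add_one ((1 - η) * n)]
  have hL : 0 < L := Nat.floor_pos.mpr hηn
  have hLr : (L : ℝ) ≤ η * n := Nat.floor_le (by linarith)
  have hBA : ((B + 1 - A : ℕ) : ℝ) ≤ n := by exact_mod_cast (by omega : B + 1 - A ≤ n)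
  have hblocks := mul_sum_Icc_sub_le_sum_Icc_mul (f := f) (W := pivotWeight n x y) (A := A)
    (B := B) (c := a - η) (D := (n : ℝ) ^ (x + y - 1)) (M := (n : ℝ) ^ (x + y)) hL (by linarith)
    (by positivity) (by positivity)
    (fun t ht => hf t (by simp only [mem_Icc] at ht ⊢; omega))
    (fun t ht => ⟨pivotWeight_nonneg n x y t,
      pivotWeight_le (by simp only [mem_Icc] at ht; omega) x y⟩)
    (fun t ht => abs_pivotWeight_succ_sub_le hx hy (by simp only [mem_Ico] at ht; omega)
      (by simp only [mem_Ico] at ht; omega))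
    (fun b hb hbB => sub_mul_le_sum_Ico_of_abs_average_sub_le hL havg (by omega) (by omega))
  have hW := sum_Icc_pivotWeight_ge n x y A B
  have herr : ((B + 1 - A : ℕ) : ℝ) * L * n ^ (x + y - 1) ≤ η * n * n ^ (x + y) := by
    calc ((B + 1 - A : ℕ) : ℝ) * L * n ^ (x + y - 1) ≤ n * (η * n) * n ^ (x + y - 1) := by gcongr
      _ = η * n * n ^ (x + y) := by
        rw [← Nat.sub_add_cancel (by omega : 1 ≤ x + y), pow_succ, Nat.add_sub_cancel]; ring
  have hM : (0 : ℝ) ≤ n ^ (x + y) := by positivity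
  refine le_trans (mul_le_mul_of_nonneg_left ?_ (by linarith)) hblocks
  nlinarith

theorem pow_le_mul_choose_of_le {k n K : ℕ} (hK : K ≤ 2 * k + 1) (hn : 4 * k + 2 ≤ n) :
    (n : ℝ) ^ K ≤ ((4 * k + 2) ^ (2 * k + 1) : ℕ) * n.choose K := by
  have hF : (2 * K) ^ K ≤ (4 * k + 2) ^ (2 * k + 1) :=
    (Nat.pow_le_pow_left (by omega) _).trans (Nat.pow_le_pow_right (by omega) hK)
  exact_mod_cast (Nat.pow_le_two_mul_pow_mul_choose (by omega)).trans (Nat.mul_le_mul_right _ hF)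

theorem one_sub_mul_le_sub_mul_sub {a ε η n F C P : ℝ} (ha : 0 ≤ a) (hε : 0 ≤ ε) (hη : 0 ≤ η)
    (hn : 0 < n) (hC : 0 ≤ C) (hP : 0 ≤ P) (hnP : n * P ≤ F * C)
    (hηε : η * (1 + 4 * a * F) ≤ ε * a / 3) (hn3F : 3 * F ≤ ε * n) :
    (1 - ε) * a * C ≤ (a - η) * (C - (4 * η * n + 1) * P) := by
  have hP3 : 3 * P ≤ ε * C := by
    refine le_of_mul_le_mul_left ?_ hn
    nlinarith [mul_le_mul_of_nonneg_right hn3F hC]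
  nlinarith [mul_le_mul_of_nonneg_left hnP (mul_nonneg ha hη), mul_le_mul_of_nonneg_left hP3 ha,
    mul_le_mul_of_nonneg_right hηε hC, mul_nonneg (mul_nonneg hε ha) hC,
    mul_nonneg hη (by positivity : (0 : ℝ) ≤ (4 * η * n + 1) * P)]

/-- For all `α, ε > 0` and `k`, there are `η > 0` and `N` such that for
all `n > N` and every `f : [n] → [0,1]` whose average over every integer interval
`J ⊆ [n]` of length at least `⌊ηn⌋` is within `η` of `α`, one has, for all `x, y ∈ [k]`,
`Σ_{t=⌈ηn⌉}^{⌊(1−η)n⌋} f(t)·C(t−1,x)·C(n−t,y) ≥ (1−ε)·α·C(n, x+y+1)`. -/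
theorem binomial_average (a ε : ℝ) (ha : 0 < a) (hε : 0 < ε) (k : ℕ) :
    ∃ η : ℝ, 0 < η ∧ ∃ N : ℕ, ∀ n : ℕ, n > N → ∀ f : ℕ → ℝ,
      (∀ t ∈ Finset.Icc 1 n, f t ∈ Set.Icc (0 : ℝ) 1) →
      (∀ s t : ℕ, 1 ≤ s → t ≤ n → Nat.floor (η * (n : ℝ)) ≤ (Finset.Icc s t).card →
        |(∑ u ∈ Finset.Icc s t, f u) / ((Finset.Icc s t).card : ℝ) - a| ≤ η) →
      ∀ x ∈ Finset.Icc 1 k, ∀ y ∈ Finset.Icc 1 k,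
        (1 - ε) * a * (n.choose (x + y + 1) : ℝ) ≤
          ∑ t ∈ Finset.Icc (Nat.ceil (η * (n : ℝ))) (Nat.floor ((1 - η) * (n : ℝ))),
            f t * ((t - 1).choose x : ℝ) * ((n - t).choose y : ℝ) := by
  -- `F` bounds `n ^ K / C(n, K)` uniformly in `K = x + y + 1 ≤ 2k + 1` (`pow_le_mul_choose_of_le`).
  set F : ℝ := (((4 * k + 2) ^ (2 * k + 1) : ℕ) : ℝ)
  have hF : 1 ≤ F := Nat.one_le_cast.mpr (Nat.one_le_pow _ _ (by omega))
  set η := ε * a / (3 * (1 + ε) * (1 + 4 * a * F))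
  have hη : 0 < η := by positivity
  have hηa : η ≤ a := by
    rw [div_le_iff₀ (by positivity)]; nlinarith [mul_pos ha hε, mul_pos (mul_pos ha ha) hε]
  have hηε : η * (1 + 4 * a * F) ≤ ε * a / 3 := by
    rw [div_mul_eq_mul_div, div_le_div_iff₀ (by positivity) (by norm_num)]
    nlinarith [mul_pos (mul_pos ha hε) (by positivity : (0 : ℝ) < 1 + 4 * a * F)]
  refine ⟨η, hη, ⌈3 * F / ε⌉₊ + ⌈1 / η⌉₊ + 4 * k + 2, fun n hn f hf havg x hx y hy => ?_⟩
  rw [mem_Icc] at hx hy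
  have hn3F : 3 * F ≤ ε * n := (div_le_iff₀' hε).mp (Nat.ceil_le.mp (by omega))
  have hηn : 1 ≤ η * n := (div_le_iff₀' hη).mp (Nat.ceil_le.mp (by omega))
  have hC := pow_le_mul_choose_of_le (k := k) (n := n) (K := x + y + 1) (by omega) (by omega)
  rw [pow_succ'] at hC
  have hS := mul_sub_le_sum_mul_pivotWeight hx.1 hy.1 hηa hηn (fun t ht => (hf t ht).1) havg
  simp only [pivotWeight, ← mul_assoc] at hS
  exact (one_sub_mul_le_sub_mul_sub ha.le hε.le hη.le (by exact_mod_cast (by omega : 0 < n))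
    (by positivity) (by positivity) hC hηε hn3F).trans hS
end

section
/- Let H be a finite graph on vertex set {1, 2, …, h} and let λ ∈ (0,1). There exists η₀ > 0 such that for every η with 0 < η ≤ η₀ there exists n₀ ∈ ℕ with the following property: if G is a graph and V_1, …, V_h are pairwise disjoint vertex sets in G, each of size at least n₀, such that the pair (V_i, V_j) is η-regular with density at least λ for every edge ij of H, then there exist vertices v_1 ∈ V_1, …, v_h ∈ V_h such that v_i v_j is an edge of G for every edge ij of H. -/
/-- `e(X, Y)`: the number of edges of `G` with one endpoint in `X` and the other in `Y`
(for disjoint `X` and `Y`). -/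
noncomputable def edgesBetween {V : Type*} (G : SimpleGraph V) (X Y : Finset V) : ℕ :=
  {p : V × V | p.1 ∈ X ∧ p.2 ∈ Y ∧ G.Adj p.1 p.2}.ncard

/-- The density `d(X, Y) = e(X,Y)/(|X|·|Y|)` between disjoint vertex sets. -/
noncomputable def dens {V : Type*} (G : SimpleGraph V) (X Y : Finset V) : ℝ :=
  (edgesBetween G X Y : ℝ) / ((X.card : ℝ) * (Y.card : ℝ))

/-- The pair `(A, B)` is `η`-regular: for all `X ⊆ A` and `Y ⊆ B` with `|X| ≥ η|A|` and
`|Y| ≥ η|B|` one has `|d(X,Y) − d(A,B)| ≤ η`. -/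
def IsRegularPair {V : Type*} (G : SimpleGraph V) (η : ℝ) (A B : Finset V) : Prop :=
  ∀ X ⊆ A, ∀ Y ⊆ B, η * (A.card : ℝ) ≤ (X.card : ℝ) → η * (B.card : ℝ) ≤ (Y.card : ℝ) →
    |dens G X Y - dens G A B| ≤ η

/-- A partition is `η`-regular if all but at most `η·C(t,2)` of the (unordered) pairs of
distinct parts are `η`-regular; here counted as ordered pairs, hence the factor `2`. -/
def IsRegularPartition {V : Type*} [DecidableEq V] [Fintype V] (G : SimpleGraph V) (η : ℝ)
    (P : Finpartition (Finset.univ : Finset V)) : Prop :=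
  ({pq : Finset V × Finset V | pq.1 ∈ P.parts ∧ pq.2 ∈ P.parts ∧ pq.1 ≠ pq.2 ∧
      ¬ IsRegularPair G η pq.1 pq.2}.ncard : ℝ) ≤ 2 * (η * (P.parts.card.choose 2 : ℝ))


/-!
Embed the vertices of `H` one at a time. Every vertex `j` not yet embedded keeps a candidate set
`C j ⊆ V_j` of vertices joined to the images of its embedded neighbours; embedding a neighbour
shrinks it by a factor at least `β = λ - η`, so `|C j| ≥ β^h |V_j| ≥ η |V_j|` throughout. Hence
regularity applies to `(C i, C j)` inside `(V_i, V_j)`: for each later neighbour `j` of the vertex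
`i` being embedded, at most `η |V_i|` vertices of `C i` have fewer than `β |C j|` neighbours in
`C j`, and as `h η < β^h` some vertex of `C i` avoids all these exceptional sets.
-/

open Finset hiding dens

section Regularity

variable {V : Type*} (G : SimpleGraph V) [DecidableRel G.Adj]

noncomputable def lowDegree (X Y : Finset V) (c : ℝ) : Finset V :=
  {a ∈ X | (#{y ∈ Y | G.Adj a y} : ℝ) < c * #Y}

variable [DecidableEq V]

lemma edgesBetween_eq_sum (X Y : Finset V) :
    edgesBetween G X Y = ∑ a ∈ X, #{y ∈ Y | G.Adj a y} := by
  have : {p : V × V | p.1 ∈ X ∧ p.2 ∈ Y ∧ G.Adj p.1 p.2} = ↑(Rel.interedges G.Adj X Y) := by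
    ext; simp [Rel.mem_interedges_iff]
  rw [edgesBetween, this, Set.ncard_coe_finset, Rel.interedges_eq_biUnion, card_biUnion]
  · simp
  · rintro x - y - hxy
    simp only [Function.onFun, disjoint_left, mem_map]
    rintro _ ⟨_, _, rfl⟩ ⟨_, _, h⟩
    exact hxy (Prod.ext_iff.1 h).1.symm

lemma dens_lt_of_forall_card_lt {X Y : Finset V} {c : ℝ} (hX : X.Nonempty)
    (hlt : ∀ a ∈ X, (#{y ∈ Y | G.Adj a y} : ℝ) < c * #Y) : dens G X Y < c := by
  obtain ⟨a, ha⟩ := hX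
  have hY : 0 < #Y := by
    by_contra! hY
    have := hlt a ha
    rw [Nat.le_zero.1 hY, Nat.cast_zero, mul_zero] at this
    exact this.not_ge (Nat.cast_nonneg _)
  have hXY : (0 : ℝ) < #X * #Y := by
    have := card_pos.2 ⟨a, ha⟩
    positivity
  rw [dens, edgesBetween_eq_sum, div_lt_iff₀ hXY, Nat.cast_sum]
  calc ∑ a ∈ X, (#{y ∈ Y | G.Adj a y} : ℝ) < ∑ _a ∈ X, c * #Y := sum_lt_sum_of_nonempty ⟨a, ha⟩ hlt
    _ = c * (#X * #Y) := by rw [sum_const, nsmul_eq_mul]; ring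

variable {G}

lemma IsRegularPair.card_lowDegree_le {η : ℝ} {A B X Y : Finset V} (hreg : IsRegularPair G η A B)
    (hη : 0 ≤ η) (hX : X ⊆ A) (hY : Y ⊆ B) (hYB : η * #B ≤ #Y) :
    (#(lowDegree G X Y (dens G A B - η)) : ℝ) ≤ η * #A := by
  by_contra! hlarge
  have hne : (lowDegree G X Y (dens G A B - η)).Nonempty :=
    card_pos.1 (Nat.cast_pos.1 (hlarge.trans_le' (by positivity)))
  have hlow := dens_lt_of_forall_card_lt G hne fun a ha => (mem_filter.1 ha).2
  have hclose := hreg (lowDegree G X Y _) ((filter_subset _ _).trans hX) Y hY hlarge.le hYB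
  linarith [(abs_le.1 hclose).1]

end Regularity

section GreedyEmbedding

variable {ι V : Type*} {H : SimpleGraph ι} [DecidableRel H.Adj] {G : SimpleGraph V}
  {Vs : ι → Finset V} {β η : ℝ} {E : Finset ι} {v : ι → V} {C : ι → Finset V}

variable (H G Vs β) in
/-- The state of the greedy embedding once the vertices of `E` are placed: `C j` is the set of
images still available to a vertex `j ∉ E`. -/
structure IsPartialEmbedding (E : Finset ι) (v : ι → V) (C : ι → Finset V) : Prop where
  mem : ∀ i ∈ E, v i ∈ Vs i
  adj : ∀ i ∈ E, ∀ j ∈ E, H.Adj i j → G.Adj (v i) (v j)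
  cand_subset : ∀ j ∉ E, C j ⊆ Vs j
  card_cand : ∀ j ∉ E, β ^ #{i ∈ E | H.Adj i j} * #(Vs j) ≤ (#(C j) : ℝ)
  adj_cand : ∀ j ∉ E, ∀ i ∈ E, H.Adj i j → ∀ x ∈ C j, G.Adj (v i) x

lemma isPartialEmbedding_empty (v : ι → V) : IsPartialEmbedding H G Vs β ∅ v Vs where
  mem := by simp
  adj := by simp
  cand_subset _ _ := subset_rfl
  card_cand _ _ := by simp
  adj_cand := by simp

lemma IsPartialEmbedding.pow_card_mul_le_card_cand [Fintype ι]
    (hs : IsPartialEmbedding H G Vs β E v C) (hβ0 : 0 ≤ β) (hβ1 : β ≤ 1) {j : ι} (hj : j ∉ E) :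
    β ^ Fintype.card ι * #(Vs j) ≤ (#(C j) : ℝ) :=
  (mul_le_mul_of_nonneg_right (pow_le_pow_of_le_one hβ0 hβ1 (card_le_univ _))
    (Nat.cast_nonneg _)).trans (hs.card_cand j hj)

variable [DecidableEq ι] [DecidableRel G.Adj] {i₀ : ι}

lemma IsPartialEmbedding.extend (hs : IsPartialEmbedding H G Vs β E v C) (hi₀ : i₀ ∉ E)
    (hβ : 0 ≤ β) {a : V} (ha : a ∈ C i₀)
    (hgood : ∀ j ∉ insert i₀ E, H.Adj i₀ j → β * #(C j) ≤ (#{y ∈ C j | G.Adj a y} : ℝ)) :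
    IsPartialEmbedding H G Vs β (insert i₀ E) (Function.update v i₀ a)
      (fun j => if H.Adj i₀ j then {y ∈ C j | G.Adj a y} else C j) := by
  have hv : ∀ i ∈ E, Function.update v i₀ a i = v i := fun i hi =>
    Function.update_of_ne (ne_of_mem_of_not_mem hi hi₀) _ _
  refine ⟨?mem, ?adj, ?cand_subset, ?card_cand, ?adj_cand⟩
  case mem =>
    intro i hi
    obtain rfl | hi := mem_insert.1 hi
    · simpa using hs.cand_subset i hi₀ ha
    · simpa [hv i hi] using hs.mem i hi
  case adj =>
    intro i hi j hj hij
    obtain rfl | hiE := mem_insert.1 hi <;> obtain rfl | hjE := mem_insert.1 hj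
    · exact absurd hij (H.loopless.irrefl _)
    · simpa [hv j hjE] using (hs.adj_cand _ hi₀ j hjE hij.symm a ha).symm
    · simpa [hv i hiE] using hs.adj_cand _ hi₀ i hiE hij a ha
    · simpa [hv i hiE, hv j hjE] using hs.adj i hiE j hjE hij
  all_goals intro j hj; have hjE : j ∉ E := fun h => hj (mem_insert_of_mem h)
  case cand_subset =>
    split_ifs
    · exact (filter_subset _ _).trans (hs.cand_subset j hjE)
    · exact hs.cand_subset j hjE
  case card_cand =>
    rw [filter_insert]
    split_ifs with hadj
    · rw [card_insert_of_notMem fun h => hi₀ (mem_filter.1 h).1, pow_succ]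
      calc β ^ #{i ∈ E | H.Adj i j} * β * #(Vs j)
          = β * (β ^ #{i ∈ E | H.Adj i j} * #(Vs j)) := by ring
        _ ≤ β * #(C j) := mul_le_mul_of_nonneg_left (hs.card_cand j hjE) hβ
        _ ≤ _ := hgood j hj hadj
    · exact hs.card_cand j hjE
  case adj_cand =>
    intro i hi hij x hx
    obtain rfl | hiE := mem_insert.1 hi
    · rw [if_pos hij] at hx
      simpa using (mem_filter.1 hx).2
    · rw [hv i hiE]
      refine hs.adj_cand j hjE i hiE hij x ?_
      split_ifs at hx
      · exact (mem_filter.1 hx).1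
      · exact hx

variable [Fintype ι] [DecidableEq V]

lemma IsPartialEmbedding.exists_good_vertex (hs : IsPartialEmbedding H G Vs β E v C)
    (hi₀ : i₀ ∉ E) (hVs : (Vs i₀).Nonempty) (hβ0 : 0 ≤ β) (hβ1 : β ≤ 1) (hη : 0 ≤ η)
    (hηβ : η ≤ β ^ Fintype.card ι) (hcover : Fintype.card ι * η < β ^ Fintype.card ι)
    (hreg : ∀ j, H.Adj i₀ j → IsRegularPair G η (Vs i₀) (Vs j) ∧ β + η ≤ dens G (Vs i₀) (Vs j)) :
    ∃ a ∈ C i₀, ∀ j ∉ insert i₀ E, H.Adj i₀ j → β * #(C j) ≤ (#{y ∈ C j | G.Adj a y} : ℝ) := by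
  set S : Finset ι := {j | j ∉ insert i₀ E ∧ H.Adj i₀ j}
  set bad : ι → Finset V := fun j => lowDegree G (C i₀) (C j) (dens G (Vs i₀) (Vs j) - η)
  have hbad : ∀ j ∈ S, (#(bad j) : ℝ) ≤ η * #(Vs i₀) := by
    intro j hj
    obtain ⟨hj, hadj⟩ := (mem_filter.1 hj).2
    have hjE : j ∉ E := fun h => hj (mem_insert_of_mem h)
    refine (hreg j hadj).1.card_lowDegree_le hη (hs.cand_subset i₀ hi₀) (hs.cand_subset j hjE) ?_
    exact (mul_le_mul_of_nonneg_right hηβ (Nat.cast_nonneg _)).trans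
      (hs.pow_card_mul_le_card_cand hβ0 hβ1 hjE)
  have hcard : (#(S.biUnion bad) : ℝ) < #(C i₀) :=
    calc (#(S.biUnion bad) : ℝ) ≤ ∑ j ∈ S, (#(bad j) : ℝ) := mod_cast card_biUnion_le
      _ ≤ #S * (η * #(Vs i₀)) := by simpa using sum_le_sum hbad
      _ ≤ Fintype.card ι * η * #(Vs i₀) := by
        rw [← mul_assoc]
        gcongr
        exact_mod_cast card_le_univ S
      _ < β ^ Fintype.card ι * #(Vs i₀) := by
        have := card_pos.2 hVs
        gcongr
      _ ≤ #(C i₀) := hs.pow_card_mul_le_card_cand hβ0 hβ1 hi₀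
  obtain ⟨a, ha, hgood⟩ := exists_mem_notMem_of_card_lt_card (mod_cast hcard)
  refine ⟨a, ha, fun j hj hadj => ?_⟩
  have hdeg : (dens G (Vs i₀) (Vs j) - η) * #(C j) ≤ (#{y ∈ C j | G.Adj a y} : ℝ) := by
    have hjS : j ∈ S := mem_filter.2 ⟨mem_univ _, hj, hadj⟩
    simpa [bad, lowDegree, ha] using fun h => hgood (mem_biUnion.2 ⟨j, hjS, h⟩)
  exact (mul_le_mul_of_nonneg_right (by linarith [(hreg j hadj).2]) (Nat.cast_nonneg _)).trans hdeg

theorem exists_embedding_of_isRegularPair (hne : ∀ i, (Vs i).Nonempty) (hβ0 : 0 ≤ β)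
    (hβ1 : β ≤ 1) (hη : 0 ≤ η) (hηβ : η ≤ β ^ Fintype.card ι)
    (hcover : Fintype.card ι * η < β ^ Fintype.card ι)
    (hreg : ∀ i j, H.Adj i j → IsRegularPair G η (Vs i) (Vs j) ∧ β + η ≤ dens G (Vs i) (Vs j)) :
    ∃ v : ι → V, (∀ i, v i ∈ Vs i) ∧ ∀ i j, H.Adj i j → G.Adj (v i) (v j) := by
  have hstate : ∀ E : Finset ι, ∃ v C, IsPartialEmbedding H G Vs β E v C := by
    intro E
    induction E using Finset.induction_on with
    | empty => exact ⟨fun i => (hne i).choose, Vs, isPartialEmbedding_empty _⟩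
    | insert i₀ E hi₀ ih =>
      obtain ⟨v, C, hs⟩ := ih
      obtain ⟨a, ha, hgood⟩ :=
        hs.exists_good_vertex hi₀ (hne i₀) hβ0 hβ1 hη hηβ hcover (hreg i₀)
      exact ⟨_, _, hs.extend hi₀ hβ0 ha hgood⟩
  obtain ⟨v, _, hs⟩ := hstate univ
  exact ⟨v, fun i => hs.mem i (mem_univ i), fun i j => hs.adj i (mem_univ i) j (mem_univ j)⟩

end GreedyEmbedding

lemma le_half_and_succ_mul_le_sub_pow {lam η : ℝ} (h : ℕ) (hlam0 : 0 < lam) (hlam1 : lam < 1)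
    (hη : 0 ≤ η) (hηle : η ≤ (lam / 2) ^ (h + 1) / (h + 1)) :
    η ≤ lam / 2 ∧ (h + 1) * η ≤ (lam - η) ^ h := by
  have hsucc : (h + 1) * η ≤ (lam / 2) ^ (h + 1) := by
    rwa [le_div_iff₀' (by positivity)] at hηle
  have hhalf : η ≤ lam / 2 :=
    calc η ≤ (h + 1) * η := le_mul_of_one_le_left hη (by linarith [h.cast_nonneg (α := ℝ)])
      _ ≤ (lam / 2) ^ (h + 1) := hsucc
      _ ≤ lam / 2 := pow_le_of_le_one (by positivity) (by linarith) h.succ_ne_zero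
  refine ⟨hhalf, hsucc.trans ?_⟩
  calc (lam / 2) ^ (h + 1) ≤ (lam / 2) ^ h :=
        pow_le_pow_of_le_one (by positivity) (by linarith) h.le_succ
    _ ≤ (lam - η) ^ h := pow_le_pow_left₀ (by positivity) (by linarith) h

/-- graph building lemma. Let `H` be a graph on `{1, …, h}` and
`λ ∈ (0,1)`. There is `η₀ > 0` such that for every `0 < η ≤ η₀` there is `n₀` with: whenever
`V_1, …, V_h` are pairwise disjoint vertex sets in a graph `G`, each of size at least `n₀`,
such that `(V_i, V_j)` is `η`-regular with density at least `λ` for every edge `ij` of `H`,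
there are vertices `v_i ∈ V_i` forming a copy of `H` in `G`. -/
theorem graph_building
    (h : ℕ) (H : SimpleGraph (Fin h)) (lam : ℝ) (hlam0 : 0 < lam) (hlam1 : lam < 1) :
    ∃ η₀ : ℝ, 0 < η₀ ∧ ∀ η : ℝ, 0 < η → η ≤ η₀ →
      ∃ n₀ : ℕ, ∀ (V : Type) [Fintype V] [DecidableEq V] (G : SimpleGraph V)
        (Vs : Fin h → Finset V),
        (∀ i j, i ≠ j → Disjoint (Vs i) (Vs j)) →
        (∀ i, n₀ ≤ (Vs i).card) →
        (∀ i j, H.Adj i j → IsRegularPair G η (Vs i) (Vs j) ∧ lam ≤ dens G (Vs i) (Vs j)) →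
        ∃ v : Fin h → V, (∀ i, v i ∈ Vs i) ∧ ∀ i j, H.Adj i j → G.Adj (v i) (v j) := by
  classical
  refine ⟨(lam / 2) ^ (h + 1) / (h + 1), by positivity, fun η hη hηle => ⟨1, ?_⟩⟩
  intro V _ _ G Vs _ hcard hreg
  obtain ⟨hηlam, hcover⟩ := le_half_and_succ_mul_le_sub_pow h hlam0 hlam1 hη.le hηle
  refine exists_embedding_of_isRegularPair (β := lam - η) (fun i => card_pos.1 (hcard i))
    (by linarith) (by linarith) hη.le ?_ ?_
    fun i j hij => ⟨(hreg i j hij).1, by linarith [(hreg i j hij).2]⟩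
  all_goals rw [Fintype.card_fin]; nlinarith
end
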